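/- arXiv:2506.16736 — 7 statements merged into one kernel-verified Lean document; each statement's English description precedes it below -/
import Mathlib

section
/- Let A be a 2×2 real payoff matrix admitting a unique Nash equilibrium (x₁*, x₂*) ∈ Δ₂ × Δ₂, and assume this equilibrium is interior (all coordinates of x₁* and x₂* are strictly positive). Then there exists a constant C (depending only on the entries of A, not on T) such that for every time horizon T, for every initialization x₁⁰ ∈ Δ₂, x₂⁰ ∈ Δ₂, and for every run of Optimistic Fictitious Play on A (under any tiebreaking rule in the argmax steps), the total regret satisfies reg(T) ≤ C. -/
open Matrix

/-- A coordinate vector `x` is a vertex (standard basis vector) maximizing `⟨·, v⟩`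
over all standard basis vectors. -/
def IsVertexArgmax {m : ℕ} (x v : Fin m → ℝ) : Prop :=
  ∃ i : Fin m, x = Pi.single i 1 ∧
    ∀ j : Fin m, (Pi.single j 1 : Fin m → ℝ) ⬝ᵥ v ≤ x ⬝ᵥ v

/-- Optimistic Fictitious Play: `y₁⁰ = 0`, `y₂⁰ = 0`, arbitrary initialization
`x₁⁰ ∈ Δ_m`, `x₂⁰ ∈ Δ_n`; for `t ≥ 1`, `y₁ᵗ = y₁ᵗ⁻¹ + A x₂ᵗ⁻¹`,
`y₂ᵗ = y₂ᵗ⁻¹ − Aᵀ x₁ᵗ⁻¹`, and `x₁ᵗ` (resp. `x₂ᵗ`) is a standard basis vector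
maximizing `⟨e, y₁ᵗ + A x₂ᵗ⁻¹⟩` (resp. `⟨e, y₂ᵗ − Aᵀ x₁ᵗ⁻¹⟩`), ties broken arbitrarily. -/
def IsOFPRun {m n : ℕ} (A : Matrix (Fin m) (Fin n) ℝ)
    (x₁ : ℕ → Fin m → ℝ) (x₂ : ℕ → Fin n → ℝ)
    (y₁ : ℕ → Fin m → ℝ) (y₂ : ℕ → Fin n → ℝ) : Prop :=
  y₁ 0 = 0 ∧ y₂ 0 = 0 ∧
  x₁ 0 ∈ stdSimplex ℝ (Fin m) ∧ x₂ 0 ∈ stdSimplex ℝ (Fin n) ∧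
  (∀ t : ℕ, y₁ (t + 1) = y₁ t + A.mulVec (x₂ t)) ∧
  (∀ t : ℕ, y₂ (t + 1) = y₂ t - Aᵀ.mulVec (x₁ t)) ∧
  (∀ t : ℕ, IsVertexArgmax (x₁ (t + 1)) (y₁ (t + 1) + A.mulVec (x₂ t))) ∧
  (∀ t : ℕ, IsVertexArgmax (x₂ (t + 1)) (y₂ (t + 1) - Aᵀ.mulVec (x₁ t)))

/-- Total regret `reg(T)`. -/
noncomputable def totalRegret {m n : ℕ} (A : Matrix (Fin m) (Fin n) ℝ)
    (x₁ : ℕ → Fin m → ℝ) (x₂ : ℕ → Fin n → ℝ) (T : ℕ) : ℝ :=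
  (⨆ x : stdSimplex ℝ (Fin m),
      (x : Fin m → ℝ) ⬝ᵥ (∑ t ∈ Finset.range (T + 1), A.mulVec (x₂ t)))
  - (⨅ x : stdSimplex ℝ (Fin n),
      (x : Fin n → ℝ) ⬝ᵥ (∑ t ∈ Finset.range (T + 1), Aᵀ.mulVec (x₁ t)))

/-- Nash equilibrium of the zero-sum game with payoff matrix `A`. -/
def IsNashEq {m n : ℕ} (A : Matrix (Fin m) (Fin n) ℝ)
    (x₁ : Fin m → ℝ) (x₂ : Fin n → ℝ) : Prop :=
  x₁ ∈ stdSimplex ℝ (Fin m) ∧ x₂ ∈ stdSimplex ℝ (Fin n) ∧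
  (∀ x ∈ stdSimplex ℝ (Fin m), x ⬝ᵥ A.mulVec x₂ ≤ x₁ ⬝ᵥ A.mulVec x₂) ∧
  (∀ y ∈ stdSimplex ℝ (Fin n), x₁ ⬝ᵥ A.mulVec x₂ ≤ x₁ ⬝ᵥ A.mulVec y)

/-!
Write `a, b` for the differences between the two rows of `A` in columns `0, 1`, and `c, d` for the
differences between the two columns in rows `0, 1`. A unique interior equilibrium forces the
matching-pennies sign pattern `a, -b, c, -d > 0` (or its mirror image). Both equilibrium strategies
earn the value against every strategy, so the regret after `T` rounds is at most `|x| + |y|`, where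
`x, y` are the differences between the two coordinates of `y₁ᵀ⁺¹, y₂ᵀ⁺¹`.

In the `(x, y)`-plane OFP moves by steps `(s, -t)` with `s ∈ {a, b}`, `t ∈ {c, d}` chosen by the
signs of the optimistic predictions, and `H(x, y) = max (c x) (d x) + max (a y) (b y)` is conserved
by the continuous best-response flow. Before a step `(a, -c)` the previous choices force `x ≥ -a`;
if the step keeps `y ≥ 0` it does not increase `H`, and otherwise it lands within
`2 (|a| + |b| + |c| + |d|)` of the origin. A quarter turn of the plane maps the dynamics to itself
and turns this case into the other three. Hence `H`, and with it `|x| + |y|`, stays bounded.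
-/

theorem dotProduct_eq_of_forall_le {ι : Type*} [Fintype ι] {p v z : ι → ℝ}
    (hp : p ∈ stdSimplex ℝ ι) (hpos : ∀ i, 0 < p i) (hle : ∀ i, v i ≤ p ⬝ᵥ v)
    (hz : z ∈ stdSimplex ℝ ι) : z ⬝ᵥ v = p ⬝ᵥ v := by
  have hsum : ∑ i, p i * (p ⬝ᵥ v - v i) = 0 := by
    simp only [mul_sub, Finset.sum_sub_distrib, ← Finset.sum_mul, hp.2, one_mul, dotProduct,
      sub_self]
  have hv (i : ι) : v i = p ⬝ᵥ v := by
    have := (Finset.sum_eq_zero_iff_of_nonneg fun j _ =>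
      mul_nonneg (hp.1 j) (sub_nonneg.2 (hle j))).1 hsum i (Finset.mem_univ i)
    linarith [(mul_eq_zero.1 this).resolve_left (hpos i).ne']
  calc z ⬝ᵥ v = ∑ i, z i * (p ⬝ᵥ v) := Finset.sum_congr rfl fun i _ => by rw [← hv i]
    _ = p ⬝ᵥ v := by rw [← Finset.sum_mul, hz.2, one_mul]

section NashEquilibrium

variable {m n : ℕ} {A : Matrix (Fin m) (Fin n) ℝ} {x₁ z₁ : Fin m → ℝ} {x₂ z₂ : Fin n → ℝ}

theorem IsNashEq.dotProduct_mulVec_eq_left (h : IsNashEq A x₁ x₂) (hpos : ∀ i, 0 < x₁ i)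
    (hz : z₁ ∈ stdSimplex ℝ (Fin m)) : z₁ ⬝ᵥ A *ᵥ x₂ = x₁ ⬝ᵥ A *ᵥ x₂ :=
  dotProduct_eq_of_forall_le h.1 hpos
    (fun i => by simpa [single_dotProduct] using h.2.2.1 _ (single_mem_stdSimplex ℝ i)) hz

theorem IsNashEq.dotProduct_mulVec_eq_right (h : IsNashEq A x₁ x₂) (hpos : ∀ j, 0 < x₂ j)
    (hz : z₂ ∈ stdSimplex ℝ (Fin n)) : x₁ ⬝ᵥ A *ᵥ z₂ = x₁ ⬝ᵥ A *ᵥ x₂ := by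
  have key := dotProduct_eq_of_forall_le (v := -(x₁ ᵥ* A)) h.2.1 hpos (fun j => ?_) hz
  · simpa [dotProduct_mulVec, dotProduct_comm] using key
  · have := h.2.2.2 _ (single_mem_stdSimplex ℝ j)
    simp only [dotProduct_mulVec, dotProduct_single, mul_one] at this
    simp only [Pi.neg_apply, dotProduct_neg, neg_le_neg_iff]
    rwa [dotProduct_comm]

theorem isNashEq_of_forall_eq {k : ℝ} (hA : ∀ i j, A i j = k)
    (h₁ : x₁ ∈ stdSimplex ℝ (Fin m)) (h₂ : x₂ ∈ stdSimplex ℝ (Fin n)) : IsNashEq A x₁ x₂ := by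
  have hval {z₁ z₂} (hz₁ : z₁ ∈ stdSimplex ℝ (Fin m)) (hz₂ : z₂ ∈ stdSimplex ℝ (Fin n)) :
      z₁ ⬝ᵥ A *ᵥ z₂ = k := by
    have : A *ᵥ z₂ = fun _ => k := funext fun i => by
      simp only [mulVec, dotProduct, hA, ← Finset.mul_sum, hz₂.2, mul_one]
    simp only [this, dotProduct, ← Finset.sum_mul, hz₁.2, one_mul]
  exact ⟨h₁, h₂, fun x hx => (hval hx h₂).trans_le (hval h₁ h₂).ge,
    fun y hy => (hval h₁ h₂).trans_le (hval h₁ hy).ge⟩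

end NashEquilibrium

theorem IsVertexArgmax.mem_stdSimplex {m : ℕ} {x v : Fin m → ℝ} (h : IsVertexArgmax x v) :
    x ∈ stdSimplex ℝ (Fin m) := by
  obtain ⟨i, rfl, -⟩ := h
  exact single_mem_stdSimplex ℝ i

namespace IsOFPRun

variable {m n : ℕ} {A : Matrix (Fin m) (Fin n) ℝ} {x₁ : ℕ → Fin m → ℝ} {x₂ : ℕ → Fin n → ℝ}
  {y₁ : ℕ → Fin m → ℝ} {y₂ : ℕ → Fin n → ℝ}

theorem fst_mem_stdSimplex (h : IsOFPRun A x₁ x₂ y₁ y₂) (t : ℕ) :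
    x₁ t ∈ stdSimplex ℝ (Fin m) := by
  obtain ⟨-, -, hx₁, -, -, -, hx₁_succ, -⟩ := h
  cases t with
  | zero => exact hx₁
  | succ t => exact (hx₁_succ t).mem_stdSimplex

theorem snd_mem_stdSimplex (h : IsOFPRun A x₁ x₂ y₁ y₂) (t : ℕ) :
    x₂ t ∈ stdSimplex ℝ (Fin n) := by
  obtain ⟨-, -, -, hx₂, -, -, -, hx₂_succ⟩ := h
  cases t with
  | zero => exact hx₂
  | succ t => exact (hx₂_succ t).mem_stdSimplex

theorem sum_mulVec_snd (h : IsOFPRun A x₁ x₂ y₁ y₂) (N : ℕ) :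
    ∑ t ∈ Finset.range N, A *ᵥ x₂ t = y₁ N := by
  obtain ⟨hy₁, -, -, -, hy₁_succ, -⟩ := h
  induction N with
  | zero => simp [hy₁]
  | succ N ih => rw [Finset.sum_range_succ, ih, hy₁_succ N]

theorem sum_mulVec_fst (h : IsOFPRun A x₁ x₂ y₁ y₂) (N : ℕ) :
    ∑ t ∈ Finset.range N, Aᵀ *ᵥ x₁ t = -y₂ N := by
  obtain ⟨-, hy₂, -, -, -, hy₂_succ, -⟩ := h
  induction N with
  | zero => simp [hy₂]
  | succ N ih => rw [Finset.sum_range_succ, ih, hy₂_succ N]; abel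

end IsOFPRun

def gap (v : Fin 2 → ℝ) : ℝ := v 0 - v 1

theorem add_eq_one_of_mem_stdSimplex {x : Fin 2 → ℝ} (hx : x ∈ stdSimplex ℝ (Fin 2)) :
    x 0 + x 1 = 1 := by
  simpa [Fin.sum_univ_two] using hx.2

theorem gap_add (u v : Fin 2 → ℝ) : gap (u + v) = gap u + gap v := by
  simp only [gap, Pi.add_apply]; ring

theorem gap_sub (u v : Fin 2 → ℝ) : gap (u - v) = gap u - gap v := by
  simp only [gap, Pi.sub_apply]; ring

theorem gap_neg (v : Fin 2 → ℝ) : gap (-v) = -gap v := by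
  simp only [gap, Pi.neg_apply]; ring

theorem gap_mulVec (M : Matrix (Fin 2) (Fin 2) ℝ) (q : Fin 2 → ℝ) :
    gap (M *ᵥ q) = q 0 * gap (M.col 0) + q 1 * gap (M.col 1) := by
  simp only [gap, mulVec, dotProduct, Fin.sum_univ_two, col_apply]; ring

theorem gap_mulVec_mem_uIcc (M : Matrix (Fin 2) (Fin 2) ℝ) {q : Fin 2 → ℝ}
    (hq : q ∈ stdSimplex ℝ (Fin 2)) : gap (M *ᵥ q) ∈ Set.uIcc (gap (M.col 0)) (gap (M.col 1)) := by
  rw [← segment_eq_uIcc]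
  exact ⟨q 0, q 1, hq.1 0, hq.1 1, by simpa [Fin.sum_univ_two] using hq.2, (gap_mulVec M q).symm⟩

theorem IsVertexArgmax.fin_two {x v : Fin 2 → ℝ} (h : IsVertexArgmax x v) :
    x = Pi.single 0 1 ∧ 0 ≤ gap v ∨ x = Pi.single 1 1 ∧ gap v ≤ 0 := by
  obtain ⟨i, rfl, hi⟩ := h
  simp only [single_dotProduct, one_mul] at hi
  fin_cases i
  · exact Or.inl ⟨rfl, sub_nonneg.2 (hi 1)⟩
  · exact Or.inr ⟨rfl, sub_nonpos.2 (hi 0)⟩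

theorem dotProduct_le_dotProduct_add_abs_gap {x p : Fin 2 → ℝ} (hx : x ∈ stdSimplex ℝ (Fin 2))
    (hp : p ∈ stdSimplex ℝ (Fin 2)) (Y : Fin 2 → ℝ) : x ⬝ᵥ Y ≤ p ⬝ᵥ Y + |gap Y| := by
  have hx₁ : x 1 = 1 - x 0 := by linarith [add_eq_one_of_mem_stdSimplex hx]
  have hp₁ : p 1 = 1 - p 0 := by linarith [add_eq_one_of_mem_stdSimplex hp]
  have hxp : |x 0 - p 0| ≤ 1 := by
    obtain ⟨hx₀, hx₀'⟩ := mem_Icc_of_mem_stdSimplex hx 0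
    obtain ⟨hp₀, hp₀'⟩ := mem_Icc_of_mem_stdSimplex hp 0
    exact abs_le.2 ⟨by linarith, by linarith⟩
  calc x ⬝ᵥ Y = p ⬝ᵥ Y + (x 0 - p 0) * gap Y := by
        simp only [dotProduct, Fin.sum_univ_two, gap, hx₁, hp₁]; ring
    _ ≤ p ⬝ᵥ Y + |x 0 - p 0| * |gap Y| :=
        add_le_add le_rfl ((le_abs_self _).trans (abs_mul _ _).le)
    _ ≤ p ⬝ᵥ Y + |gap Y| := add_le_add le_rfl (mul_le_of_le_one_left (abs_nonneg _) hxp)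

section TwoByTwo

variable {A : Matrix (Fin 2) (Fin 2) ℝ} {xs₁ xs₂ : Fin 2 → ℝ}

theorem IsNashEq.gap_mulVec_eq_zero (hNE : IsNashEq A xs₁ xs₂) (hInt₁ : ∀ i, 0 < xs₁ i) :
    gap (A *ᵥ xs₂) = 0 := by
  have h₀ := hNE.dotProduct_mulVec_eq_left hInt₁ (single_mem_stdSimplex ℝ 0)
  have h₁ := hNE.dotProduct_mulVec_eq_left hInt₁ (single_mem_stdSimplex ℝ 1)
  rw [single_dotProduct, one_mul] at h₀ h₁
  rw [gap, h₀, h₁, sub_self]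

theorem IsNashEq.gap_transpose_mulVec_eq_zero (hNE : IsNashEq A xs₁ xs₂)
    (hInt₂ : ∀ i, 0 < xs₂ i) : gap (Aᵀ *ᵥ xs₁) = 0 := by
  have h₀ := hNE.dotProduct_mulVec_eq_right hInt₂ (single_mem_stdSimplex ℝ 0)
  have h₁ := hNE.dotProduct_mulVec_eq_right hInt₂ (single_mem_stdSimplex ℝ 1)
  rw [mulVec_single_one] at h₀ h₁
  have hcol (j : Fin 2) : (xs₁ ᵥ* A) j = xs₁ ⬝ᵥ A.col j := rfl
  rw [gap, mulVec_transpose, hcol, hcol, h₀, h₁, sub_self]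

theorem IsNashEq.exists_ne_of_unique (hNE : IsNashEq A xs₁ xs₂)
    (hUniq : ∀ x₁' x₂', IsNashEq A x₁' x₂' → x₁' = xs₁ ∧ x₂' = xs₂) (hInt₁ : ∀ i, 0 < xs₁ i) :
    ∃ i j, A i j ≠ A 0 0 := by
  by_contra! hA
  have := congr_fun (hUniq _ _ (isNashEq_of_forall_eq hA (single_mem_stdSimplex ℝ 0) hNE.2.1)).1 1
  exact (hInt₁ 1).ne' (by simpa using this.symm)

theorem signs_of_isNashEq_unique (hNE : IsNashEq A xs₁ xs₂)
    (hUniq : ∀ x₁' x₂', IsNashEq A x₁' x₂' → x₁' = xs₁ ∧ x₂' = xs₂)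
    (hInt₁ : ∀ i, 0 < xs₁ i) (hInt₂ : ∀ i, 0 < xs₂ i) :
    0 < gap (A.col 0) ∧ gap (A.col 1) < 0 ∧ 0 < gap (A.row 0) ∧ gap (A.row 1) < 0 ∨
      gap (A.col 0) < 0 ∧ 0 < gap (A.col 1) ∧ gap (A.row 0) < 0 ∧ 0 < gap (A.row 1) := by
  have hcol := hNE.gap_mulVec_eq_zero hInt₁
  have hrow := hNE.gap_transpose_mulVec_eq_zero hInt₂
  rw [gap_mulVec] at hcol hrow
  simp only [col_transpose] at hrow
  have hsum₁ := add_eq_one_of_mem_stdSimplex hNE.1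
  have hdiff : gap (A.col 0) - gap (A.col 1) = gap (A.row 0) - gap (A.row 1) := by
    simp only [gap, col_apply, row_apply]; ring
  have hc : gap (A.row 0) = xs₁ 1 * (gap (A.col 0) - gap (A.col 1)) := by
    linear_combination hrow - gap (A.row 0) * hsum₁ - xs₁ 1 * hdiff
  have hd : gap (A.row 1) = -(xs₁ 0 * (gap (A.col 0) - gap (A.col 1))) := by
    linear_combination hrow - gap (A.row 1) * hsum₁ + xs₁ 0 * hdiff
  have hq₀ := hInt₂ 0; have hq₁ := hInt₂ 1
  have hne : gap (A.col 0) ≠ 0 := by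
    intro ha
    have hb : gap (A.col 1) = 0 := by simpa [ha, hq₁.ne'] using hcol
    rw [ha, hb, sub_zero, mul_zero] at hc hd
    obtain ⟨i, j, hij⟩ := hNE.exists_ne_of_unique hUniq hInt₁
    simp only [gap, col_apply, row_apply, sub_eq_zero, neg_zero] at ha hb hc hd
    fin_cases i <;> fin_cases j <;> simp at hij <;> exact hij (by linarith)
  rcases hne.lt_or_gt with ha | ha
  · have hb : 0 < gap (A.col 1) := by nlinarith
    exact Or.inr ⟨ha, hb, hc ▸ mul_neg_of_pos_of_neg (hInt₁ 1) (by linarith),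
      hd ▸ neg_pos.2 (mul_neg_of_pos_of_neg (hInt₁ 0) (by linarith))⟩
  · have hb : gap (A.col 1) < 0 := by nlinarith
    exact Or.inl ⟨ha, hb, hc ▸ mul_pos (hInt₁ 1) (by linarith),
      hd ▸ neg_neg_of_pos (mul_pos (hInt₁ 0) (by linarith))⟩

theorem totalRegret_le_abs_gap_add_abs_gap {x₁ x₂ y₁ y₂ : ℕ → Fin 2 → ℝ}
    (hNE : IsNashEq A xs₁ xs₂) (hInt₁ : ∀ i, 0 < xs₁ i) (hInt₂ : ∀ i, 0 < xs₂ i)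
    (h : IsOFPRun A x₁ x₂ y₁ y₂) (T : ℕ) :
    totalRegret A x₁ x₂ T ≤ |gap (y₁ (T + 1))| + |gap (y₂ (T + 1))| := by
  -- both sides are `T + 1` times the value of the game
  have hvalue : xs₁ ⬝ᵥ y₁ (T + 1) = xs₂ ⬝ᵥ -y₂ (T + 1) := by
    rw [← h.sum_mulVec_snd, ← h.sum_mulVec_fst, dotProduct_sum, dotProduct_sum]
    refine Finset.sum_congr rfl fun t _ => ?_
    calc xs₁ ⬝ᵥ A *ᵥ x₂ t = xs₁ ⬝ᵥ A *ᵥ xs₂ :=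
          hNE.dotProduct_mulVec_eq_right hInt₂ (h.snd_mem_stdSimplex t)
      _ = x₁ t ⬝ᵥ A *ᵥ xs₂ := (hNE.dotProduct_mulVec_eq_left hInt₁ (h.fst_mem_stdSimplex t)).symm
      _ = xs₂ ⬝ᵥ Aᵀ *ᵥ x₁ t := by rw [dotProduct_mulVec, mulVec_transpose, dotProduct_comm]
  have : Nonempty (stdSimplex ℝ (Fin 2)) := ⟨⟨_, single_mem_stdSimplex ℝ 0⟩⟩
  have hsup : ⨆ x : stdSimplex ℝ (Fin 2), (x : Fin 2 → ℝ) ⬝ᵥ y₁ (T + 1) ≤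
      xs₁ ⬝ᵥ y₁ (T + 1) + |gap (y₁ (T + 1))| :=
    ciSup_le fun x => dotProduct_le_dotProduct_add_abs_gap x.2 hNE.1 _
  have hinf : xs₂ ⬝ᵥ -y₂ (T + 1) - |gap (y₂ (T + 1))| ≤
      ⨅ x : stdSimplex ℝ (Fin 2), (x : Fin 2 → ℝ) ⬝ᵥ -y₂ (T + 1) :=
    le_ciInf fun x => by
      rw [sub_le_iff_le_add, ← abs_neg, ← gap_neg]
      exact dotProduct_le_dotProduct_add_abs_gap hNE.2.1 x.2 _
  unfold totalRegret
  rw [h.sum_mulVec_snd, h.sum_mulVec_fst]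
  linarith

end TwoByTwo

/-- OFP on a `2 × 2` game seen through `gap`: `x n = gap (y₁ n)` and `y n = gap (y₂ n)` move by
`s n = gap (A x₂ⁿ)` and `-t n`, where `t n = gap (Aᵀ x₁ⁿ)`. Pure strategies of player 2 give
`s ∈ {a, b}`, those of player 1 give `t ∈ {c, d}`, and each new pure strategy follows the sign of
the optimistic prediction `y (n + 1) - t n`, resp. `x (n + 1) + s n`. -/
structure IsPlanarOFPRun (a b c d : ℝ) (x y s t : ℕ → ℝ) : Prop where
  x_zero : x 0 = 0
  y_zero : y 0 = 0
  s_zero : s 0 ∈ Set.uIcc a b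
  t_zero : t 0 ∈ Set.uIcc c d
  x_succ (n : ℕ) : x (n + 1) = x n + s n
  y_succ (n : ℕ) : y (n + 1) = y n - t n
  s_succ (n : ℕ) : s (n + 1) = a ∧ t n ≤ y (n + 1) ∨ s (n + 1) = b ∧ y (n + 1) ≤ t n
  t_succ (n : ℕ) : t (n + 1) = c ∧ -s n ≤ x (n + 1) ∨ t (n + 1) = d ∧ x (n + 1) ≤ -s n

def potential (a b c d x y : ℝ) : ℝ := max (c * x) (d * x) + max (a * y) (b * y)

def potentialBound (a b c d : ℝ) : ℝ := 2 * (|a| + |b| + |c| + |d|) ^ 2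

section Potential

variable {a b c d x y : ℝ}

theorem potential_rotate : potential (-d) (-c) a b y (-x) = potential a b c d x y := by
  simp only [potential, neg_mul_neg]
  rw [add_comm, max_comm (d * x)]

theorem potentialBound_rotate : potentialBound (-d) (-c) a b = potentialBound a b c d := by
  simp only [potentialBound, abs_neg]
  ring

theorem max_mul_le_abs_add_abs_mul : max (c * x) (d * x) ≤ (|c| + |d|) * |x| := by
  rw [add_mul, ← abs_mul, ← abs_mul]
  exact max_le (by linarith [le_abs_self (c * x), abs_nonneg (d * x)])
    (by linarith [le_abs_self (d * x), abs_nonneg (c * x)])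

theorem potential_le_mul_abs_add_abs :
    potential a b c d x y ≤ (|a| + |b| + |c| + |d|) * (|x| + |y|) := by
  have hx : max (c * x) (d * x) ≤ (|c| + |d|) * |x| := max_mul_le_abs_add_abs_mul
  have hy : max (a * y) (b * y) ≤ (|a| + |b|) * |y| := max_mul_le_abs_add_abs_mul
  have := mul_nonneg (add_nonneg (abs_nonneg a) (abs_nonneg b)) (abs_nonneg x)
  have := mul_nonneg (add_nonneg (abs_nonneg c) (abs_nonneg d)) (abs_nonneg y)
  unfold potential
  nlinarith

theorem min_mul_abs_le_max_mul :
    min c (-d) * |x| ≤ max (c * x) (d * x) := by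
  rcases le_total 0 x with hx | hx
  · rw [abs_of_nonneg hx]
    exact (mul_le_mul_of_nonneg_right (min_le_left _ _) hx).trans (le_max_left _ _)
  · rw [abs_of_nonpos hx]
    nlinarith [min_le_right c (-d), le_max_right (c * x) (d * x)]

theorem abs_add_abs_add_abs_add_abs (ha : 0 < a) (hb : b < 0) (hc : 0 < c) (hd : d < 0) :
    |a| + |b| + |c| + |d| = a - b + c - d := by
  rw [abs_of_pos ha, abs_of_neg hb, abs_of_pos hc, abs_of_neg hd]; ring

theorem potential_add_sub_le (hba : b ≤ a) (hdc : d ≤ c) (ha : 0 ≤ a) (hy : c ≤ y) :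
    potential a b c d (x + a) (y - c) ≤ potential a b c d x y := by
  have hx : max (c * (x + a)) (d * (x + a)) ≤ max (c * x) (d * x) + c * a :=
    max_le (by nlinarith [le_max_left (c * x) (d * x)])
      (by nlinarith [le_max_right (c * x) (d * x)])
  have hy' : max (a * (y - c)) (b * (y - c)) = a * (y - c) := max_eq_left (by nlinarith)
  have := le_max_left (a * y) (b * y)
  unfold potential
  linarith

end Potential

namespace IsPlanarOFPRun

variable {a b c d : ℝ} {x y s t : ℕ → ℝ}

theorem rotate (h : IsPlanarOFPRun a b c d x y s t) :
    IsPlanarOFPRun (-d) (-c) a b y (fun n => -x n) (fun n => -t n) s where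
  x_zero := h.y_zero
  y_zero := by simp [h.x_zero]
  s_zero := by simpa [Set.uIcc_comm] using Set.mem_image_of_mem Neg.neg h.t_zero
  t_zero := h.s_zero
  x_succ n := by rw [h.y_succ n, sub_eq_add_neg]
  y_succ n := by rw [h.x_succ n, neg_add, sub_eq_add_neg]
  s_succ n := by
    rcases h.t_succ n with ⟨ht, hx⟩ | ⟨ht, hx⟩
    · exact Or.inr ⟨by rw [ht], by linarith⟩
    · exact Or.inl ⟨by rw [ht], by linarith⟩
  t_succ n := by simpa only [neg_neg] using h.s_succ n

theorem reflect (h : IsPlanarOFPRun a b c d x y s t) :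
    IsPlanarOFPRun (-a) (-b) d c (fun n => -x n) y (fun n => -s n) t where
  x_zero := by simp [h.x_zero]
  y_zero := h.y_zero
  s_zero := by simpa using Set.mem_image_of_mem Neg.neg h.s_zero
  t_zero := Set.uIcc_comm c d ▸ h.t_zero
  x_succ n := by rw [h.x_succ n, neg_add]
  y_succ := h.y_succ
  s_succ n := by
    rcases h.s_succ n with ⟨hs, hy⟩ | ⟨hs, hy⟩
    · exact Or.inl ⟨by rw [hs], hy⟩
    · exact Or.inr ⟨by rw [hs], hy⟩
  t_succ n := by
    rcases h.t_succ n with ⟨ht, hx⟩ | ⟨ht, hx⟩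
    · exact Or.inr ⟨ht, by linarith⟩
    · exact Or.inl ⟨ht, by linarith⟩

theorem s_mem_Icc (h : IsPlanarOFPRun a b c d x y s t) (hba : b ≤ a) : ∀ n, s n ∈ Set.Icc b a
  | 0 => Set.uIcc_of_ge hba ▸ h.s_zero
  | n + 1 => by rcases h.s_succ n with ⟨hs, -⟩ | ⟨hs, -⟩ <;> simp [hs, hba]

theorem t_mem_Icc (h : IsPlanarOFPRun a b c d x y s t) (hdc : d ≤ c) : ∀ n, t n ∈ Set.Icc d c
  | 0 => Set.uIcc_of_ge hdc ▸ h.t_zero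
  | n + 1 => by rcases h.t_succ n with ⟨ht, -⟩ | ⟨ht, -⟩ <;> simp [ht, hdc]

theorem x_succ_le_of_t_ne (h : IsPlanarOFPRun a b c d x y s t) (hba : b ≤ a) (hb : b ≤ 0) :
    ∀ n, t n ≠ c → x (n + 1) ≤ a - b
  | 0, _ => by linarith [h.x_succ 0, h.x_zero, (h.s_mem_Icc hba 0).2]
  | n + 1, hne => by
    rcases h.t_succ n with ⟨ht, -⟩ | ⟨-, hx⟩
    · exact absurd ht hne
    · linarith [h.x_succ (n + 1), (h.s_mem_Icc hba n).1, (h.s_mem_Icc hba (n + 1)).2]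

theorem potential_le_of_s_eq_of_t_eq (h : IsPlanarOFPRun a b c d x y s t)
    (ha : 0 < a) (hb : b < 0) (hc : 0 < c) (hd : d < 0) {n : ℕ}
    (hs : s (n + 1) = a) (ht : t (n + 1) = c)
    (hK : potential a b c d (x (n + 1)) (y (n + 1)) ≤ potentialBound a b c d) :
    potential a b c d (x (n + 2)) (y (n + 2)) ≤ potentialBound a b c d := by
  have hty : t n ≤ y (n + 1) := by
    rcases h.s_succ n with ⟨-, hty⟩ | ⟨hs', -⟩
    · exact hty
    · linarith
  have hsx : -s n ≤ x (n + 1) := by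
    rcases h.t_succ n with ⟨-, hsx⟩ | ⟨ht', -⟩
    · exact hsx
    · linarith
  rw [show x (n + 2) = x (n + 1) + a from hs ▸ h.x_succ (n + 1),
    show y (n + 2) = y (n + 1) - c from ht ▸ h.y_succ (n + 1)]
  rcases le_or_gt c (y (n + 1)) with hcy | hyc
  · exact (potential_add_sub_le (by linarith) (by linarith) ha.le hcy).trans hK
  · have hM := abs_add_abs_add_abs_add_abs ha hb hc hd
    have hxa := h.x_succ_le_of_t_ne (by linarith) hb.le n (hty.trans_lt hyc).ne
    have hsn := h.s_mem_Icc (by linarith) n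
    have htn := h.t_mem_Icc (by linarith) n
    have hx : |x (n + 1) + a| ≤ 2 * a - b := abs_le.2 ⟨by linarith [hsn.2], by linarith⟩
    have hy : |y (n + 1) - c| ≤ c - d := abs_le.2 ⟨by linarith [htn.1], by linarith⟩
    calc potential a b c d (x (n + 1) + a) (y (n + 1) - c)
        ≤ (|a| + |b| + |c| + |d|) * (|x (n + 1) + a| + |y (n + 1) - c|) :=
          potential_le_mul_abs_add_abs
      _ ≤ (|a| + |b| + |c| + |d|) * (2 * (|a| + |b| + |c| + |d|)) := by
          gcongr; rw [hM]; linarith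
      _ = potentialBound a b c d := by unfold potentialBound; ring

theorem potential_le_of_s_eq (h : IsPlanarOFPRun a b c d x y s t)
    (ha : 0 < a) (hb : b < 0) (hc : 0 < c) (hd : d < 0) {n : ℕ} (hs : s (n + 1) = a)
    (hK : potential a b c d (x (n + 1)) (y (n + 1)) ≤ potentialBound a b c d) :
    potential a b c d (x (n + 2)) (y (n + 2)) ≤ potentialBound a b c d := by
  rcases h.t_succ n with ⟨ht, -⟩ | ⟨ht, -⟩
  · exact h.potential_le_of_s_eq_of_t_eq ha hb hc hd hs ht hK
  · have := h.rotate.potential_le_of_s_eq_of_t_eq (neg_pos.2 hd) (neg_lt_zero.2 hc) ha hb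
      (by rw [ht]) hs (by rwa [potential_rotate, potentialBound_rotate])
    rwa [potential_rotate, potentialBound_rotate] at this

theorem potential_succ_succ_le (h : IsPlanarOFPRun a b c d x y s t)
    (ha : 0 < a) (hb : b < 0) (hc : 0 < c) (hd : d < 0) {n : ℕ}
    (hK : potential a b c d (x (n + 1)) (y (n + 1)) ≤ potentialBound a b c d) :
    potential a b c d (x (n + 2)) (y (n + 2)) ≤ potentialBound a b c d := by
  rcases h.s_succ n with ⟨hs, -⟩ | ⟨hs, -⟩
  · exact h.potential_le_of_s_eq ha hb hc hd hs hK
  · have := h.rotate.rotate.potential_le_of_s_eq (neg_pos.2 hb) (neg_lt_zero.2 ha)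
      (neg_pos.2 hd) (neg_lt_zero.2 hc) (by rw [hs])
      (by rwa [potential_rotate, potential_rotate, potentialBound_rotate, potentialBound_rotate])
    rwa [potential_rotate, potential_rotate, potentialBound_rotate, potentialBound_rotate] at this

theorem potential_le (h : IsPlanarOFPRun a b c d x y s t)
    (ha : 0 < a) (hb : b < 0) (hc : 0 < c) (hd : d < 0) :
    ∀ n, potential a b c d (x n) (y n) ≤ potentialBound a b c d
  | 0 => by
    simp only [h.x_zero, h.y_zero, potential, mul_zero, max_self, add_zero, potentialBound]
    positivity
  | 1 => by
    have hM := abs_add_abs_add_abs_add_abs ha hb hc hd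
    have hs := h.s_mem_Icc (by linarith) 0
    have ht := h.t_mem_Icc (by linarith) 0
    have hx : |x 1| ≤ a - b := by
      rw [h.x_succ 0, h.x_zero, zero_add]; exact abs_le.2 ⟨by linarith [hs.1], by linarith [hs.2]⟩
    have hy : |y 1| ≤ c - d := by
      rw [h.y_succ 0, h.y_zero, zero_sub, abs_neg]
      exact abs_le.2 ⟨by linarith [ht.1], by linarith [ht.2]⟩
    calc potential a b c d (x 1) (y 1) ≤ (|a| + |b| + |c| + |d|) * (|x 1| + |y 1|) :=
          potential_le_mul_abs_add_abs
      _ ≤ (|a| + |b| + |c| + |d|) * (|a| + |b| + |c| + |d|) :=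
          mul_le_mul_of_nonneg_left (by rw [hM]; linarith) (by positivity)
      _ ≤ potentialBound a b c d := by unfold potentialBound; nlinarith
  | n + 2 => h.potential_succ_succ_le ha hb hc hd (h.potential_le ha hb hc hd (n + 1))

theorem abs_add_abs_le (h : IsPlanarOFPRun a b c d x y s t)
    (ha : 0 < a) (hb : b < 0) (hc : 0 < c) (hd : d < 0) (n : ℕ) :
    |x n| + |y n| ≤ potentialBound a b c d / min (min c (-d)) (min a (-b)) := by
  have hm : 0 < min (min c (-d)) (min a (-b)) := by
    simp only [lt_min_iff, neg_pos]; exact ⟨⟨hc, hd⟩, ha, hb⟩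
  rw [le_div_iff₀' hm]
  calc min (min c (-d)) (min a (-b)) * (|x n| + |y n|)
      ≤ min c (-d) * |x n| + min a (-b) * |y n| := by
        rw [mul_add]
        exact add_le_add (mul_le_mul_of_nonneg_right (min_le_left _ _) (abs_nonneg _))
          (mul_le_mul_of_nonneg_right (min_le_right _ _) (abs_nonneg _))
    _ ≤ potential a b c d (x n) (y n) :=
        add_le_add min_mul_abs_le_max_mul min_mul_abs_le_max_mul
    _ ≤ potentialBound a b c d := h.potential_le ha hb hc hd n

end IsPlanarOFPRun

theorem exists_forall_isPlanarOFPRun_abs_add_abs_le {a b c d : ℝ}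
    (hsign : 0 < a ∧ b < 0 ∧ 0 < c ∧ d < 0 ∨ a < 0 ∧ 0 < b ∧ c < 0 ∧ 0 < d) :
    ∃ C, ∀ x y s t, IsPlanarOFPRun a b c d x y s t → ∀ n, |x n| + |y n| ≤ C := by
  rcases hsign with ⟨ha, hb, hc, hd⟩ | ⟨ha, hb, hc, hd⟩
  · exact ⟨_, fun x y s t h => h.abs_add_abs_le ha hb hc hd⟩
  · refine ⟨potentialBound (-a) (-b) d c / min (min d (-c)) (min (-a) (-(-b))),
      fun x y s t h n => ?_⟩
    simpa only [abs_neg] using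
      h.reflect.abs_add_abs_le (neg_pos.2 ha) (neg_lt_zero.2 hb) hd hc n

theorem IsOFPRun.isPlanarOFPRun {A : Matrix (Fin 2) (Fin 2) ℝ} {x₁ x₂ y₁ y₂ : ℕ → Fin 2 → ℝ}
    (h : IsOFPRun A x₁ x₂ y₁ y₂) :
    IsPlanarOFPRun (gap (A.col 0)) (gap (A.col 1)) (gap (A.row 0)) (gap (A.row 1))
      (fun n => gap (y₁ n)) (fun n => gap (y₂ n))
      (fun n => gap (A *ᵥ x₂ n)) (fun n => gap (Aᵀ *ᵥ x₁ n)) := by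
  obtain ⟨hy₁, hy₂, hx₁, hx₂, hy₁_succ, hy₂_succ, hx₁_succ, hx₂_succ⟩ := h
  refine
    { x_zero := by simp [hy₁, gap]
      y_zero := by simp [hy₂, gap]
      s_zero := gap_mulVec_mem_uIcc A hx₂
      t_zero := by simpa using gap_mulVec_mem_uIcc Aᵀ hx₁
      x_succ := fun n => by simp only [hy₁_succ n, gap_add]
      y_succ := fun n => by simp only [hy₂_succ n, gap_sub]
      s_succ := fun n => ?_
      t_succ := fun n => ?_ }
  · rcases (hx₂_succ n).fin_two with ⟨hx, hv⟩ | ⟨hx, hv⟩ <;> rw [gap_sub] at hv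
    · exact Or.inl ⟨by rw [hx, mulVec_single_one], by linarith⟩
    · exact Or.inr ⟨by rw [hx, mulVec_single_one], by linarith⟩
  · rcases (hx₁_succ n).fin_two with ⟨hx, hv⟩ | ⟨hx, hv⟩ <;> rw [gap_add] at hv
    · exact Or.inl ⟨by rw [hx, mulVec_single_one, col_transpose], by linarith⟩
    · exact Or.inr ⟨by rw [hx, mulVec_single_one, col_transpose], by linarith⟩

/-- For a 2×2 zero-sum game with a unique, interior Nash equilibrium,
Optimistic Fictitious Play (any initialization, any tiebreaking) has regret
bounded by a constant `C` depending only on `A`. -/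
theorem ofp_constant_regret_2x2
    (A : Matrix (Fin 2) (Fin 2) ℝ) (xs₁ xs₂ : Fin 2 → ℝ)
    (hNE : IsNashEq A xs₁ xs₂)
    (hUniq : ∀ x₁' x₂', IsNashEq A x₁' x₂' → x₁' = xs₁ ∧ x₂' = xs₂)
    (hInt₁ : ∀ i, 0 < xs₁ i) (hInt₂ : ∀ i, 0 < xs₂ i) :
    ∃ C : ℝ, ∀ (x₁ x₂ y₁ y₂ : ℕ → Fin 2 → ℝ),
      IsOFPRun A x₁ x₂ y₁ y₂ → ∀ T : ℕ, totalRegret A x₁ x₂ T ≤ C := by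
  obtain ⟨C, hC⟩ := exists_forall_isPlanarOFPRun_abs_add_abs_le
    (signs_of_isNashEq_unique hNE hUniq hInt₁ hInt₂)
  exact ⟨C, fun x₁ x₂ y₁ y₂ h T =>
    (totalRegret_le_abs_gap_add_abs_gap hNE hInt₁ hInt₂ h T).trans (hC _ _ _ _ h.isPlanarOFPRun _)⟩
end

section
/- Let A ∈ ℝ^{m×n}, let J ∈ ℝ^{(m+n)×(m+n)} be the block matrix J = [[0, A], [−Aᵀ, 0]], and let y ∈ ℝ^{m+n}. If x ∈ Δ_m × Δ_n attains the maximum in Ψ(y), i.e., ⟨x, y⟩ = Ψ(y), then Ψ(y + Jx) ≥ Ψ(y). Consequently, along the dual iterates of standard Fictitious Play, which satisfy y^{t+1} = y^t + J xᵗ with xᵗ a maximizer of ⟨·, yᵗ⟩ over Δ_m × Δ_n, the energy Ψ(yᵗ) is non-decreasing in t. -/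
open Matrix

noncomputable def energy {m n : ℕ} (y₁ : Fin m → ℝ) (y₂ : Fin n → ℝ) : ℝ :=
  ⨆ p : ↥(stdSimplex ℝ (Fin m)) × ↥(stdSimplex ℝ (Fin n)),
    (p.1 : Fin m → ℝ) ⬝ᵥ y₁ + (p.2 : Fin n → ℝ) ⬝ᵥ y₂

lemma simplex_dot_le {k : ℕ} {x : Fin k → ℝ} (hx : x ∈ stdSimplex ℝ (Fin k))
    (y : Fin k → ℝ) : x ⬝ᵥ y ≤ ∑ i, |y i| := by
  have hx1 : ∀ i, x i ≤ 1 := fun i => by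
    calc x i ≤ ∑ j, x j := Finset.single_le_sum (fun j _ => hx.1 j) (Finset.mem_univ i)
    _ = 1 := hx.2
  unfold dotProduct
  apply Finset.sum_le_sum
  intro i _
  calc x i * y i ≤ x i * |y i| := by
        exact mul_le_mul_of_nonneg_left (le_abs_self _) (hx.1 i)
    _ ≤ 1 * |y i| := mul_le_mul_of_nonneg_right (hx1 i) (abs_nonneg _)
    _ = |y i| := one_mul _

lemma energy_bdd {m n : ℕ} (y₁ : Fin m → ℝ) (y₂ : Fin n → ℝ) :
    BddAbove (Set.range fun p : ↥(stdSimplex ℝ (Fin m)) × ↥(stdSimplex ℝ (Fin n)) =>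
      (p.1 : Fin m → ℝ) ⬝ᵥ y₁ + (p.2 : Fin n → ℝ) ⬝ᵥ y₂) := by
  refine ⟨(∑ i, |y₁ i|) + ∑ i, |y₂ i|, ?_⟩
  rintro r ⟨p, rfl⟩
  exact add_le_add (simplex_dot_le p.1.2 y₁) (simplex_dot_le p.2.2 y₂)

lemma le_energy {m n : ℕ} {x₁ : Fin m → ℝ} {x₂ : Fin n → ℝ}
    (h₁ : x₁ ∈ stdSimplex ℝ (Fin m)) (h₂ : x₂ ∈ stdSimplex ℝ (Fin n))
    (y₁ : Fin m → ℝ) (y₂ : Fin n → ℝ) :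
    x₁ ⬝ᵥ y₁ + x₂ ⬝ᵥ y₂ ≤ energy y₁ y₂ :=
  le_ciSup (energy_bdd y₁ y₂) (⟨x₁, h₁⟩, ⟨x₂, h₂⟩)

/-- if `x ∈ Δ_m × Δ_n` attains the maximum in `Ψ(y)`, then
`Ψ(y + Jx) ≥ Ψ(y)`; consequently, the energy is non-decreasing along the dual
iterates of standard Fictitious Play (`y^{t+1} = yᵗ + J xᵗ` with `xᵗ` a
maximizer of `⟨·, yᵗ⟩` over the product simplex). -/
theorem fp_energy_nondecreasing {m n : ℕ} (A : Matrix (Fin m) (Fin n) ℝ) :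
    (∀ (y₁ : Fin m → ℝ) (y₂ : Fin n → ℝ) (x₁ : Fin m → ℝ) (x₂ : Fin n → ℝ),
      x₁ ∈ stdSimplex ℝ (Fin m) → x₂ ∈ stdSimplex ℝ (Fin n) →
      x₁ ⬝ᵥ y₁ + x₂ ⬝ᵥ y₂ = energy y₁ y₂ →
      energy y₁ y₂ ≤ energy (y₁ + A.mulVec x₂) (y₂ - Aᵀ.mulVec x₁)) ∧
    (∀ (Y₁ : ℕ → Fin m → ℝ) (Y₂ : ℕ → Fin n → ℝ)
       (X₁ : ℕ → Fin m → ℝ) (X₂ : ℕ → Fin n → ℝ),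
      (∀ t, X₁ t ∈ stdSimplex ℝ (Fin m)) →
      (∀ t, X₂ t ∈ stdSimplex ℝ (Fin n)) →
      (∀ t, X₁ t ⬝ᵥ Y₁ t + X₂ t ⬝ᵥ Y₂ t = energy (Y₁ t) (Y₂ t)) →
      (∀ t, Y₁ (t + 1) = Y₁ t + A.mulVec (X₂ t)) →
      (∀ t, Y₂ (t + 1) = Y₂ t - Aᵀ.mulVec (X₁ t)) →
      Monotone (fun t => energy (Y₁ t) (Y₂ t))) := by
  have key : ∀ (y₁ : Fin m → ℝ) (y₂ : Fin n → ℝ) (x₁ : Fin m → ℝ) (x₂ : Fin n → ℝ),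
      x₁ ∈ stdSimplex ℝ (Fin m) → x₂ ∈ stdSimplex ℝ (Fin n) →
      x₁ ⬝ᵥ y₁ + x₂ ⬝ᵥ y₂ = energy y₁ y₂ →
      energy y₁ y₂ ≤ energy (y₁ + A.mulVec x₂) (y₂ - Aᵀ.mulVec x₁) := by
    intro y₁ y₂ x₁ x₂ h₁ h₂ hmax
    have skew : x₁ ⬝ᵥ A.mulVec x₂ = x₂ ⬝ᵥ Aᵀ.mulVec x₁ := by
      rw [Matrix.mulVec_transpose, Matrix.dotProduct_mulVec, dotProduct_comm]
    have : x₁ ⬝ᵥ (y₁ + A.mulVec x₂) + x₂ ⬝ᵥ (y₂ - Aᵀ.mulVec x₁)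
        = x₁ ⬝ᵥ y₁ + x₂ ⬝ᵥ y₂ := by
      rw [dotProduct_add, dotProduct_sub, skew]; ring
    calc energy y₁ y₂ = x₁ ⬝ᵥ (y₁ + A.mulVec x₂) + x₂ ⬝ᵥ (y₂ - Aᵀ.mulVec x₁) := by
          rw [this, hmax]
      _ ≤ _ := le_energy h₁ h₂ _ _
  refine ⟨key, ?_⟩
  intro Y₁ Y₂ X₁ X₂ hX₁ hX₂ hmax hrec₁ hrec₂
  apply monotone_nat_of_le_succ
  intro t
  rw [hrec₁ t, hrec₂ t]
  exact key (Y₁ t) (Y₂ t) (X₁ t) (X₂ t) (hX₁ t) (hX₂ t) (hmax t)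
end

section
/- Let A = [[a,b],[c,d]] ∈ ℝ^{2×2} satisfy det A = ad − bc = 0 and a, d > max{0, b, c}, and set ρ₁ = (d−c)/(a−b) > 0 and ρ₂ = (d−b)/(a−c) > 0. Let x₁ᵏ, x₂ᵏ ∈ Δ₂ for k = 0, 1, 2, … be arbitrary, and define y₁ᵗ = Σ_{k=0}^{t−1} A x₂ᵏ ∈ ℝ² and y₂ᵗ = −Σ_{k=0}^{t−1} Aᵀ x₁ᵏ ∈ ℝ². Then for every t ≥ 1, the coordinates satisfy y₁ᵗ₂ = −ρ₁·y₁ᵗ₁ and y₂ᵗ₂ = −ρ₂·y₂ᵗ₁ (i.e., all dual payoff vectors lie in a fixed two-dimensional subspace of ℝ⁴). -/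
open Matrix

/-- The image of a singular `2 × 2` matrix is the line spanned by the difference of its columns,
`(a - b, c - d)`. -/
theorem mulVec_apply_one_of_det_eq_zero {K : Type*} [Field K] {a b c d : K}
    (hdet : a * d - b * c = 0) (hab : a - b ≠ 0) (x : Fin 2 → K) :
    (!![a, b; c, d] *ᵥ x) 1 = -((d - c) / (a - b)) * (!![a, b; c, d] *ᵥ x) 0 := by
  simp only [mulVec, of_apply, vec2_dotProduct, cons_val_zero, cons_val_one]
  field_simp
  linear_combination (x 0 + x 1) * hdet

theorem Finset.sum_apply_one_eq_mul_sum_apply_zero {ι R : Type*} [CommSemiring R]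
    {s : Finset ι} {f : ι → Fin 2 → R} {r : R} (h : ∀ i ∈ s, f i 1 = r * f i 0) :
    (∑ i ∈ s, f i) 1 = r * (∑ i ∈ s, f i) 0 := by
  simp only [Finset.sum_apply, Finset.mul_sum]
  exact Finset.sum_congr rfl h

theorem dual_iterates_in_subspace_general
    (a b c d : ℝ)
    (hdet : a * d - b * c = 0)
    (ha : a > max 0 (max b c))
    (ρ₁ ρ₂ : ℝ)
    (hρ₁ : ρ₁ = (d - c) / (a - b)) (hρ₂ : ρ₂ = (d - b) / (a - c))
    (x₁ x₂ : ℕ → Fin 2 → ℝ)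
    (y₁ y₂ : ℕ → Fin 2 → ℝ)
    (hy₁ : ∀ t, y₁ t = ∑ k ∈ Finset.range t, (!![a, b; c, d]).mulVec (x₂ k))
    (hy₂ : ∀ t, y₂ t = -∑ k ∈ Finset.range t, (!![a, b; c, d])ᵀ.mulVec (x₁ k)) :
    ∀ t : ℕ, 1 ≤ t → y₁ t 1 = -ρ₁ * y₁ t 0 ∧ y₂ t 1 = -ρ₂ * y₂ t 0 := by
  obtain ⟨-, hb, hc⟩ : 0 < a ∧ b < a ∧ c < a := by simpa using ha
  have hdet' : a * d - c * b = 0 := by linarith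
  have htranspose : !![a, b; c, d]ᵀ = !![a, c; b, d] := (eta_fin_two _).trans rfl
  intro t _
  constructor
  · rw [hy₁, hρ₁]
    exact Finset.sum_apply_one_eq_mul_sum_apply_zero fun k _ ↦
      mulVec_apply_one_of_det_eq_zero hdet (sub_ne_zero.2 hb.ne') (x₂ k)
  · rw [hy₂, hρ₂, htranspose, Pi.neg_apply, Pi.neg_apply, mul_neg,
      Finset.sum_apply_one_eq_mul_sum_apply_zero fun k _ ↦
        mulVec_apply_one_of_det_eq_zero hdet' (sub_ne_zero.2 hc.ne') (x₁ k)]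

/-- under `det A = 0` and `a, d > max{0, b, c}`, the cumulative dual
payoff vectors `y₁ᵗ = Σ_{k<t} A x₂ᵏ` and `y₂ᵗ = −Σ_{k<t} Aᵀ x₁ᵏ` satisfy
`y₁ᵗ₂ = −ρ₁·y₁ᵗ₁` and `y₂ᵗ₂ = −ρ₂·y₂ᵗ₁` for all `t ≥ 1`, where
`ρ₁ = (d−c)/(a−b)` and `ρ₂ = (d−b)/(a−c)`. -/
theorem dual_iterates_in_subspace
    (a b c d : ℝ)
    (hdet : a * d - b * c = 0)
    (ha : a > max 0 (max b c)) (hd : d > max 0 (max b c))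
    (ρ₁ ρ₂ : ℝ)
    (hρ₁ : ρ₁ = (d - c) / (a - b)) (hρ₂ : ρ₂ = (d - b) / (a - c))
    (x₁ x₂ : ℕ → Fin 2 → ℝ)
    (hx₁ : ∀ k, x₁ k ∈ stdSimplex ℝ (Fin 2))
    (hx₂ : ∀ k, x₂ k ∈ stdSimplex ℝ (Fin 2))
    (y₁ y₂ : ℕ → Fin 2 → ℝ)
    (hy₁ : ∀ t, y₁ t = ∑ k ∈ Finset.range t, (!![a, b; c, d]).mulVec (x₂ k))
    (hy₂ : ∀ t, y₂ t = -∑ k ∈ Finset.range t, (!![a, b; c, d])ᵀ.mulVec (x₁ k)) :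
    ∀ t : ℕ, 1 ≤ t → y₁ t 1 = -ρ₁ * y₁ t 0 ∧ y₂ t 1 = -ρ₂ * y₂ t 0 :=
  dual_iterates_in_subspace_general a b c d hdet ha ρ₁ ρ₂ hρ₁ hρ₂ x₁ x₂ y₁ y₂ hy₁ hy₂
end

section
/- Let A = [[a,b],[c,d]] ∈ ℝ^{2×2} satisfy det A = ad − bc = 0 and a, d > max{0, b, c}, with ρ₁, ρ₂, a_max, the regions Pᵢ, Pᵢ∼ᵢ₊₁, P̂ᵢ, the energy ψ, the matrix S, and the threshold B as defined. Suppose z ∈ ℝ² satisfies ψ(z) > B and z ∈ P̂ᵢ ∪ P₍ᵢ₋₁₎∼ᵢ for some i ∈ {1,2,3,4} (indices mod 4). If z̃ = z + Sⱼ or z̃ = z + Sⱼ + Sₖ for some columns Sⱼ, Sₖ of S (j, k ∈ {1,2,3,4}), then z̃ ∉ P̂ᵢ₊₂ ∪ P₍ᵢ₊₁₎∼₍ᵢ₊₂₎. -/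
/-- The open quadrants `P₁, P₂, P₃, P₄` (0-indexed: `Pset 0 = P₁`, …, `Pset 3 = P₄`). -/
def Pset : Fin 4 → Set (ℝ × ℝ) :=
  ![{z | z.1 < 0 ∧ z.2 < 0}, {z | z.1 < 0 ∧ 0 < z.2},
    {z | 0 < z.1 ∧ 0 < z.2}, {z | 0 < z.1 ∧ z.2 < 0}]

/-- The boundary rays: `Pbd i = P_{i∼(i+1)}` (0-indexed: `Pbd 0 = P₁∼₂`, `Pbd 1 = P₂∼₃`,
`Pbd 2 = P₃∼₄`, `Pbd 3 = P₄∼₁`). -/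
def Pbd : Fin 4 → Set (ℝ × ℝ) :=
  ![{z | z.1 < 0 ∧ z.2 = 0}, {z | z.1 = 0 ∧ 0 < z.2},
    {z | 0 < z.1 ∧ z.2 = 0}, {z | z.1 = 0 ∧ z.2 < 0}]

/-- `P̂ᵢ = Pᵢ ∪ Pᵢ∼ᵢ₊₁`. -/
def Phat (i : Fin 4) : Set (ℝ × ℝ) := Pset i ∪ Pbd i

/-- The subspace energy `ψ`: `ψ((0,0)) = 0`, `ψ(z) = −ρ₁z₁ − ρ₂z₂` on `P̂₁`,
`−ρ₁z₁ + z₂` on `P̂₂`, `z₁ + z₂` on `P̂₃`, `z₁ − ρ₂z₂` on `P̂₄`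
(note `P̂₁ = {z₁<0, z₂≤0}`, `P̂₂ = {z₁≤0, z₂>0}`, `P̂₃ = {z₁>0, z₂≥0}`,
`P̂₄ = {z₁≥0, z₂<0}`). -/
noncomputable def psi (ρ₁ ρ₂ : ℝ) (z : ℝ × ℝ) : ℝ :=
  if z.1 < 0 ∧ z.2 ≤ 0 then -ρ₁ * z.1 - ρ₂ * z.2
  else if z.1 ≤ 0 ∧ 0 < z.2 then -ρ₁ * z.1 + z.2
  else if 0 < z.1 ∧ 0 ≤ z.2 then z.1 + z.2
  else if 0 ≤ z.1 ∧ z.2 < 0 then z.1 - ρ₂ * z.2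
  else 0

/-- The columns of `S = [[b, a, a, b], [−c, −c, −a, −a]]`. -/
def Scol (a b c : ℝ) : Fin 4 → ℝ × ℝ :=
  ![(b, -c), (a, -c), (a, -a), (b, -a)]

/-- The threshold `B = min{ β ≥ 0 : ψ(z) ≤ β for all z with ‖z‖₁ ≤ 6·a_max }`. -/
noncomputable def Bconst (ρ₁ ρ₂ amax : ℝ) : ℝ :=
  sInf {β : ℝ | 0 ≤ β ∧ ∀ z : ℝ × ℝ, |z.1| + |z.2| ≤ 6 * amax → psi ρ₁ ρ₂ z ≤ β}

/-- A choice map `Q` (encoding the argmax with arbitrary tiebreaking):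
`Q((0,0)) = e₁`, `Q(z) = eᵢ` on `Pᵢ`, and `Q(z) ∈ {eᵢ, eᵢ₊₁}` on `Pᵢ∼ᵢ₊₁`
(we record the index of the chosen standard basis vector, 0-indexed). -/
def IsChoiceMap (Q : ℝ × ℝ → Fin 4) : Prop :=
  Q (0, 0) = 0 ∧
  (∀ i : Fin 4, ∀ z ∈ Pset i, Q z = i) ∧
  (∀ i : Fin 4, ∀ z ∈ Pbd i, Q z = i ∨ Q z = i + 1)

lemma psi_bound (ρ₁ ρ₂ : ℝ) (h₁ : 0 ≤ ρ₁) (h₂ : 0 ≤ ρ₂) (z : ℝ × ℝ) :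
    psi ρ₁ ρ₂ z ≤ (max ρ₁ 1) * |z.1| + (max ρ₂ 1) * |z.2| := by
  have m1 := le_max_left ρ₁ 1
  have m1' : (1:ℝ) ≤ max ρ₁ 1 := le_max_right ρ₁ 1
  have m2 := le_max_left ρ₂ 1
  have m2' : (1:ℝ) ≤ max ρ₂ 1 := le_max_right ρ₂ 1
  unfold psi
  split_ifs with h h' h'' h''' <;>
    rcases abs_cases z.1 with ⟨e1, s1⟩ | ⟨e1, s1⟩ <;>
    rcases abs_cases z.2 with ⟨e2, s2⟩ | ⟨e2, s2⟩ <;>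
    rw [e1, e2] <;> nlinarith [h₁, h₂]

lemma Bconst_bound (ρ₁ ρ₂ amax : ℝ) (h₁ : 0 ≤ ρ₁) (h₂ : 0 ≤ ρ₂) (hm : 0 ≤ amax)
    (z : ℝ × ℝ) (hz : |z.1| + |z.2| ≤ 6 * amax) :
    psi ρ₁ ρ₂ z ≤ Bconst ρ₁ ρ₂ amax := by
  have hne : ((max ρ₁ 1 + max ρ₂ 1) * (6 * amax)) ∈
      {β : ℝ | 0 ≤ β ∧ ∀ w : ℝ × ℝ, |w.1| + |w.2| ≤ 6 * amax → psi ρ₁ ρ₂ w ≤ β} := by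
    constructor
    · have h1 : (0:ℝ) < max ρ₁ 1 := lt_of_lt_of_le one_pos (le_max_right _ _)
      have h2 : (0:ℝ) < max ρ₂ 1 := lt_of_lt_of_le one_pos (le_max_right _ _)
      positivity
    · intro w hw
      have hb := psi_bound ρ₁ ρ₂ h₁ h₂ w
      have a1 : (0:ℝ) ≤ |w.1| := abs_nonneg _
      have a2 : (0:ℝ) ≤ |w.2| := abs_nonneg _
      have q1 : (1:ℝ) ≤ max ρ₁ 1 := le_max_right _ _
      have q2 : (1:ℝ) ≤ max ρ₂ 1 := le_max_right _ _
      nlinarith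
  exact le_csInf ⟨_, hne⟩ (fun β hβ => hβ.2 z hz)

/-- if `ψ(z) > B` and `z ∈ P̂ᵢ ∪ P₍ᵢ₋₁₎∼ᵢ`, then any point obtained
from `z` by adding one or two columns of `S` avoids `P̂ᵢ₊₂ ∪ P₍ᵢ₊₁₎∼₍ᵢ₊₂₎`
(indices mod 4; here `i : Fin 4` is the 0-indexed label of `Pᵢ₊₁` in the paper's
1-indexed notation). -/
theorem two_step_region_avoidance
    (a b c d : ℝ)
    (hdet : a * d - b * c = 0)
    (ha : a > max 0 (max b c)) (hd : d > max 0 (max b c))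
    (ρ₁ ρ₂ amax : ℝ)
    (hρ₁ : ρ₁ = (d - c) / (a - b)) (hρ₂ : ρ₂ = (d - b) / (a - c))
    (hamax : amax = max (max |a| |b|) (max |c| |d|))
    (i : Fin 4) (z : ℝ × ℝ)
    (hψ : Bconst ρ₁ ρ₂ amax < psi ρ₁ ρ₂ z)
    (hz : z ∈ Phat i ∪ Pbd (i - 1))
    (zt : ℝ × ℝ)
    (hzt : (∃ j : Fin 4, zt = z + Scol a b c j) ∨
           (∃ j k : Fin 4, zt = z + Scol a b c j + Scol a b c k)) :
    zt ∉ Phat (i + 2) ∪ Pbd (i + 1) := by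
  have hb : b < a := lt_of_le_of_lt (le_trans (le_max_left b c) (le_max_right 0 _)) ha
  have hc : c < a := lt_of_le_of_lt (le_trans (le_max_right b c) (le_max_right 0 _)) ha
  have hb' : b < d := lt_of_le_of_lt (le_trans (le_max_left b c) (le_max_right 0 _)) hd
  have hc' : c < d := lt_of_le_of_lt (le_trans (le_max_right b c) (le_max_right 0 _)) hd
  have ha0 : 0 < a := lt_of_le_of_lt (le_max_left 0 _) ha
  have hρ₁0 : 0 ≤ ρ₁ := by rw [hρ₁]; apply div_nonneg <;> linarith
  have hρ₂0 : 0 ≤ ρ₂ := by rw [hρ₂]; apply div_nonneg <;> linarith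
  have hma : |a| ≤ amax := by rw [hamax]; exact le_trans (le_max_left _ _) (le_max_left _ _)
  have hmb : |b| ≤ amax := by rw [hamax]; exact le_trans (le_max_right _ _) (le_max_left _ _)
  have hmc : |c| ≤ amax := by rw [hamax]; exact le_trans (le_max_left _ _) (le_max_right _ _)
  have hm0 : 0 < amax := lt_of_lt_of_le (abs_pos.mpr ha0.ne') hma
  have hnorm : 6 * amax < |z.1| + |z.2| := by
    by_contra hcon
    push_neg at hcon
    exact absurd (Bconst_bound ρ₁ ρ₂ amax hρ₁0 hρ₂0 hm0.le z hcon) (not_le.mpr hψ)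
  have hScol : ∀ j : Fin 4, |(Scol a b c j).1| ≤ amax ∧ |(Scol a b c j).2| ≤ amax := by
    intro j
    fin_cases j <;> simp [Scol, abs_neg] <;> first | (constructor <;> assumption) | assumption
  have hs : |zt.1 - z.1| ≤ 2 * amax ∧ |zt.2 - z.2| ≤ 2 * amax := by
    rcases hzt with ⟨j, rfl⟩ | ⟨j, k, rfl⟩
    · obtain ⟨u1, u2⟩ := hScol j
      constructor
      · simp only [Prod.fst_add, add_sub_cancel_left]
        linarith [abs_nonneg (Scol a b c j).1]
      · simp only [Prod.snd_add, add_sub_cancel_left]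
        linarith [abs_nonneg (Scol a b c j).2]
    · obtain ⟨u1, u2⟩ := hScol j
      obtain ⟨v1, v2⟩ := hScol k
      constructor
      · have : (z + Scol a b c j + Scol a b c k).1 - z.1
            = (Scol a b c j).1 + (Scol a b c k).1 := by
          simp [Prod.fst_add]; ring
        rw [this]
        calc |(Scol a b c j).1 + (Scol a b c k).1|
            ≤ |(Scol a b c j).1| + |(Scol a b c k).1| := abs_add_le _ _
          _ ≤ 2 * amax := by linarith
      · have : (z + Scol a b c j + Scol a b c k).2 - z.2
            = (Scol a b c j).2 + (Scol a b c k).2 := by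
          simp [Prod.snd_add]; ring
        rw [this]
        calc |(Scol a b c j).2 + (Scol a b c k).2|
            ≤ |(Scol a b c j).2| + |(Scol a b c k).2| := abs_add_le _ _
          _ ≤ 2 * amax := by linarith
  obtain ⟨hd1, hd2⟩ := hs
  have w1 := le_abs_self (zt.1 - z.1)
  have w1' := neg_abs_le (zt.1 - z.1)
  have w2 := le_abs_self (zt.2 - z.2)
  have w2' := neg_abs_le (zt.2 - z.2)
  intro hmem
  fin_cases i <;>
    simp only [Phat, Pset, Pbd, Fin.isValue, Set.mem_union, Set.mem_setOf_eq,
      show ((0:Fin 4) - 1) = 3 from rfl, show ((0:Fin 4) + 2) = 2 from rfl,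
      show ((0:Fin 4) + 1) = 1 from rfl, show ((1:Fin 4) - 1) = 0 from rfl,
      show ((1:Fin 4) + 2) = 3 from rfl, show ((1:Fin 4) + 1) = 2 from rfl,
      show ((2:Fin 4) - 1) = 1 from rfl, show ((2:Fin 4) + 2) = 0 from rfl,
      show ((2:Fin 4) + 1) = 3 from rfl, show ((3:Fin 4) - 1) = 2 from rfl,
      show ((3:Fin 4) + 2) = 1 from rfl, show ((3:Fin 4) + 1) = 0 from rfl,
      Matrix.cons_val_zero, Matrix.cons_val_one, Matrix.head_cons,
      Matrix.cons_val_two, Matrix.tail_cons, Matrix.cons_val_three] at hz hmem <;>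
    · rcases hz with (⟨p1, p2⟩ | ⟨p1, p2⟩) | ⟨p1, p2⟩ <;>
        rcases hmem with (⟨q1, q2⟩ | ⟨q1, q2⟩) | ⟨q1, q2⟩ <;>
        rcases abs_cases z.1 with ⟨e1, s1⟩ | ⟨e1, s1⟩ <;>
        rcases abs_cases z.2 with ⟨e2, s2⟩ | ⟨e2, s2⟩ <;>
        linarith
end

section
/- Let A = [[a,b],[c,d]] ∈ ℝ^{2×2} satisfy det A = ad − bc = 0 and a, d > max{0, b, c}, with ρ₁, ρ₂, a_max, ψ, S, and B as defined. Suppose zᵗ ∈ ℝ² satisfies ψ(zᵗ) ≤ B and zᵗ⁺¹ = zᵗ + Sⱼ for some column Sⱼ of S. Then ψ(zᵗ⁺¹) ≤ 8·a_max·(1 + ρ₁ + ρ₂)². -/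
lemma psi_le_max (ρ₁ ρ₂ : ℝ) (z : ℝ × ℝ) :
    psi ρ₁ ρ₂ z ≤ max (max (-ρ₁ * z.1 - ρ₂ * z.2) (-ρ₁ * z.1 + z.2))
      (max (z.1 + z.2) (z.1 - ρ₂ * z.2)) := by
  unfold psi
  split_ifs with h1 h2 h3 h4
  · exact le_max_of_le_left (le_max_left _ _)
  · exact le_max_of_le_left (le_max_right _ _)
  · exact le_max_of_le_right (le_max_left _ _)
  · exact le_max_of_le_right (le_max_right _ _)
  · push_neg at h1 h2 h3 h4
    have hz1 : z.1 = 0 := by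
      rcases lt_trichotomy z.1 0 with h | h | h
      · linarith [h1 h, h2 h.le]
      · exact h
      · linarith [h3 h, h4 h.le]
    have hz2 : z.2 = 0 := by
      rcases lt_trichotomy z.2 0 with h' | h' | h'
      · linarith [h4 hz1.ge]
      · exact h'
      · linarith [h2 hz1.le]
    refine le_max_of_le_right (le_max_of_le_left ?_)
    rw [hz1, hz2]; norm_num

lemma forms_le_psi (ρ₁ ρ₂ : ℝ) (hr1 : 0 < ρ₁) (hr2 : 0 < ρ₂) (z : ℝ × ℝ) :
    -ρ₁ * z.1 - ρ₂ * z.2 ≤ psi ρ₁ ρ₂ z ∧ -ρ₁ * z.1 + z.2 ≤ psi ρ₁ ρ₂ z ∧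
    z.1 + z.2 ≤ psi ρ₁ ρ₂ z ∧ z.1 - ρ₂ * z.2 ≤ psi ρ₁ ρ₂ z := by
  unfold psi
  split_ifs with h1 h2 h3 h4
  · obtain ⟨ha, hb⟩ := h1
    refine ⟨le_refl _, ?_, ?_, ?_⟩ <;> nlinarith
  · obtain ⟨ha, hb⟩ := h2
    refine ⟨?_, le_refl _, ?_, ?_⟩ <;> nlinarith
  · obtain ⟨ha, hb⟩ := h3
    refine ⟨?_, ?_, le_refl _, ?_⟩ <;> nlinarith
  · obtain ⟨ha, hb⟩ := h4
    refine ⟨?_, ?_, ?_, le_refl _⟩ <;> nlinarith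
  · push_neg at h1 h2 h3 h4
    have hz1 : z.1 = 0 := by
      rcases lt_trichotomy z.1 0 with h | h | h
      · linarith [h1 h, h2 h.le]
      · exact h
      · linarith [h3 h, h4 h.le]
    have hz2 : z.2 = 0 := by
      rcases lt_trichotomy z.2 0 with h' | h' | h'
      · linarith [h4 hz1.ge]
      · exact h'
      · linarith [h2 hz1.le]
    rw [hz1, hz2]; norm_num

lemma psi_le_norm (ρ₁ ρ₂ : ℝ) (hr1 : 0 < ρ₁) (hr2 : 0 < ρ₂) (z : ℝ × ℝ) :
    psi ρ₁ ρ₂ z ≤ max 1 (max ρ₁ ρ₂) * (|z.1| + |z.2|) := by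
  have hM1 : (1:ℝ) ≤ max 1 (max ρ₁ ρ₂) := le_max_left _ _
  have hMr1 : ρ₁ ≤ max 1 (max ρ₁ ρ₂) := le_max_of_le_right (le_max_left _ _)
  have hMr2 : ρ₂ ≤ max 1 (max ρ₁ ρ₂) := le_max_of_le_right (le_max_right _ _)
  have ha1 : -z.1 ≤ |z.1| := neg_le_abs _
  have ha2 : -z.2 ≤ |z.2| := neg_le_abs _
  have hb1 : z.1 ≤ |z.1| := le_abs_self _
  have hb2 : z.2 ≤ |z.2| := le_abs_self _
  have hn1 : (0:ℝ) ≤ |z.1| := abs_nonneg _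
  have hn2 : (0:ℝ) ≤ |z.2| := abs_nonneg _
  unfold psi
  split_ifs with h1 h2 h3 h4 <;>
    nlinarith [mul_le_mul_of_nonneg_left ha1 hr1.le, mul_le_mul_of_nonneg_left ha2 hr2.le,
      mul_le_mul_of_nonneg_right hMr1 hn1, mul_le_mul_of_nonneg_right hMr2 hn2,
      mul_le_mul_of_nonneg_right hM1 hn1, mul_le_mul_of_nonneg_right hM1 hn2]

/-- if `ψ(zᵗ) ≤ B` and `zᵗ⁺¹ = zᵗ + Sⱼ` for some column `Sⱼ` of `S`,
then `ψ(zᵗ⁺¹) ≤ 8·a_max·(1 + ρ₁ + ρ₂)²`. -/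
theorem energy_upper_bound_after_crossing
    (a b c d : ℝ)
    (hdet : a * d - b * c = 0)
    (ha : a > max 0 (max b c)) (hd : d > max 0 (max b c))
    (ρ₁ ρ₂ amax : ℝ)
    (hρ₁ : ρ₁ = (d - c) / (a - b)) (hρ₂ : ρ₂ = (d - b) / (a - c))
    (hamax : amax = max (max |a| |b|) (max |c| |d|))
    (z znext : ℝ × ℝ)
    (hψ : psi ρ₁ ρ₂ z ≤ Bconst ρ₁ ρ₂ amax)
    (hstep : ∃ j : Fin 4, znext = z + Scol a b c j) :
    psi ρ₁ ρ₂ znext ≤ 8 * amax * (1 + ρ₁ + ρ₂) ^ 2 := by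
  obtain ⟨h0a, hbca⟩ := max_lt_iff.mp ha
  obtain ⟨hba, hca⟩ := max_lt_iff.mp hbca
  obtain ⟨h0d, hbcd⟩ := max_lt_iff.mp hd
  obtain ⟨hbd, hcd⟩ := max_lt_iff.mp hbcd
  have hr1 : 0 < ρ₁ := by rw [hρ₁]; exact div_pos (by linarith) (by linarith)
  have hr2 : 0 < ρ₂ := by rw [hρ₂]; exact div_pos (by linarith) (by linarith)
  set M := max 1 (max ρ₁ ρ₂) with hMdef
  have hM1 : (1:ℝ) ≤ M := le_max_left _ _
  have hMr1 : ρ₁ ≤ M := le_max_of_le_right (le_max_left _ _)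
  have hMr2 : ρ₂ ≤ M := le_max_of_le_right (le_max_right _ _)
  have hMpos : (0:ℝ) < M := by linarith
  have hA : |a| ≤ amax := by rw [hamax]; exact le_max_of_le_left (le_max_left _ _)
  have hB : |b| ≤ amax := by rw [hamax]; exact le_max_of_le_left (le_max_right _ _)
  have hC : |c| ≤ amax := by rw [hamax]; exact le_max_of_le_right (le_max_left _ _)
  have ha_le : a ≤ amax := (le_abs_self a).trans hA
  have hamax0 : 0 < amax := lt_of_lt_of_le h0a ha_le
  -- bound on Bconst
  have hBle : Bconst ρ₁ ρ₂ amax ≤ 6 * amax * M := by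
    apply csInf_le ⟨0, fun x hx => hx.1⟩
    refine ⟨by nlinarith, fun w hw => ?_⟩
    calc psi ρ₁ ρ₂ w ≤ M * (|w.1| + |w.2|) := psi_le_norm ρ₁ ρ₂ hr1 hr2 w
      _ ≤ M * (6 * amax) := mul_le_mul_of_nonneg_left hw hMpos.le
      _ = 6 * amax * M := by ring
  obtain ⟨j, hj⟩ := hstep
  set s := Scol a b c j with hsdef
  -- subadditivity
  have hsub : psi ρ₁ ρ₂ (z + s) ≤ psi ρ₁ ρ₂ z + psi ρ₁ ρ₂ s := by
    refine (psi_le_max ρ₁ ρ₂ (z + s)).trans ?_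
    obtain ⟨hz1, hz2, hz3, hz4⟩ := forms_le_psi ρ₁ ρ₂ hr1 hr2 z
    obtain ⟨hs1, hs2, hs3, hs4⟩ := forms_le_psi ρ₁ ρ₂ hr1 hr2 s
    have e1 : (z + s).1 = z.1 + s.1 := rfl
    have e2 : (z + s).2 = z.2 + s.2 := rfl
    rw [e1, e2]
    refine max_le (max_le ?_ ?_) (max_le ?_ ?_) <;> linarith [hz1, hz2, hz3, hz4, hs1, hs2, hs3, hs4]
  -- bound on the step
  have hs_norm : |s.1| + |s.2| ≤ 2 * amax := by
    fin_cases j <;> simp [hsdef, Scol, abs_neg] <;> linarith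
  have hψs : psi ρ₁ ρ₂ s ≤ 2 * amax * M :=
    calc psi ρ₁ ρ₂ s ≤ M * (|s.1| + |s.2|) := psi_le_norm ρ₁ ρ₂ hr1 hr2 s
      _ ≤ M * (2 * amax) := mul_le_mul_of_nonneg_left hs_norm hMpos.le
      _ = 2 * amax * M := by ring
  have hMT : M ≤ 1 + ρ₁ + ρ₂ := max_le (by linarith) (max_le (by linarith) (by linarith))
  have key : psi ρ₁ ρ₂ znext ≤ 8 * amax * M := by
    rw [hj]; linarith
  have h8 : (0:ℝ) ≤ 8 * amax := by linarith
  have hT1 : (1:ℝ) ≤ 1 + ρ₁ + ρ₂ := by linarith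
  have hTnn : (0:ℝ) ≤ 8 * amax * (1 + ρ₁ + ρ₂) := by nlinarith
  have hstep2 := mul_le_mul_of_nonneg_left hT1 hTnn
  calc psi ρ₁ ρ₂ znext ≤ 8 * amax * M := key
    _ ≤ 8 * amax * (1 + ρ₁ + ρ₂) := mul_le_mul_of_nonneg_left hMT h8
    _ ≤ 8 * amax * (1 + ρ₁ + ρ₂) ^ 2 := by nlinarith [hstep2]
end

section
/- Let A = [[a,b],[c,d]] ∈ ℝ^{2×2} satisfy det A = ad − bc = 0 and a, d > max{0, b, c}, with ρ₁, ρ₂, the regions, ψ, S, M, and Q as defined. Fix i ∈ {1,2,3,4} and suppose zᵗ ∈ P̂ᵢ, z̃ᵗ⁺¹ ∈ ℝ², and zᵗ⁺¹ = zᵗ + S·Q(z̃ᵗ⁺¹), where zᵗ, z̃ᵗ⁺¹ arise from the OFP dual dynamics (in particular zᵗ − zᵗ⁻¹ is a column of S and z̃ᵗ⁺¹ = 2zᵗ − zᵗ⁻¹). If either (i) z̃ᵗ⁺¹ ∈ P̂ᵢ and zᵗ⁺¹ ∈ P̂ᵢ, or (ii) z̃ᵗ⁺¹ ∈ Pᵢ₊₁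 and zᵗ⁺¹ ∈ Pᵢ₊₁ (indices mod 4), then ψ(zᵗ⁺¹) − ψ(zᵗ) ≤ 0. -/
lemma psi_1 (ρ₁ ρ₂ x y : ℝ) (h1 : x < 0) (h2 : y ≤ 0) :
    psi ρ₁ ρ₂ (x, y) = -ρ₁ * x - ρ₂ * y := by
  simp only [psi]
  rw [if_pos ⟨h1, h2⟩]

lemma psi_2 (ρ₁ ρ₂ x y : ℝ) (h1 : x ≤ 0) (h2 : 0 < y) :
    psi ρ₁ ρ₂ (x, y) = -ρ₁ * x + y := by
  simp only [psi]
  rw [if_neg (by rintro ⟨-, h⟩; linarith), if_pos ⟨h1, h2⟩]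

lemma psi_3 (ρ₁ ρ₂ x y : ℝ) (h1 : 0 < x) (h2 : 0 ≤ y) :
    psi ρ₁ ρ₂ (x, y) = x + y := by
  simp only [psi]
  rw [if_neg (by rintro ⟨h, -⟩; linarith), if_neg (by rintro ⟨h, -⟩; linarith),
    if_pos ⟨h1, h2⟩]

lemma psi_4 (ρ₁ ρ₂ x y : ℝ) (h1 : 0 ≤ x) (h2 : y < 0) :
    psi ρ₁ ρ₂ (x, y) = x - ρ₂ * y := by
  simp only [psi]
  rw [if_neg (by rintro ⟨h, -⟩; linarith), if_neg (by rintro ⟨-, h⟩; linarith),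
    if_neg (by rintro ⟨-, h⟩; linarith), if_pos ⟨h1, h2⟩]


set_option maxHeartbeats 2000000 in
/-- non-increasing energy: for OFP dual iterates with `zᵗ ∈ P̂ᵢ`,
`zᵗ − zᵗ⁻¹` a column of `S`, `z̃ᵗ⁺¹ = 2zᵗ − zᵗ⁻¹`, and `zᵗ⁺¹ = zᵗ + S·Q(z̃ᵗ⁺¹)`:
if either (i) `z̃ᵗ⁺¹, zᵗ⁺¹ ∈ P̂ᵢ` or (ii) `z̃ᵗ⁺¹, zᵗ⁺¹ ∈ Pᵢ₊₁`, then
`ψ(zᵗ⁺¹) − ψ(zᵗ) ≤ 0`. -/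
theorem ofp_energy_nonincreasing_cases
    (a b c d : ℝ)
    (hdet : a * d - b * c = 0)
    (ha : a > max 0 (max b c)) (hd : d > max 0 (max b c))
    (ρ₁ ρ₂ : ℝ)
    (hρ₁ : ρ₁ = (d - c) / (a - b)) (hρ₂ : ρ₂ = (d - b) / (a - c))
    (Q : ℝ × ℝ → Fin 4) (hQ : IsChoiceMap Q)
    (i : Fin 4)
    (zprev z zt znext : ℝ × ℝ)
    (hz : z ∈ Phat i)
    (hstep : ∃ j : Fin 4, z = zprev + Scol a b c j)
    (hzt : zt = (2 : ℝ) • z - zprev)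
    (hznext : znext = z + Scol a b c (Q zt))
    (hcases : (zt ∈ Phat i ∧ znext ∈ Phat i) ∨
              (zt ∈ Pset (i + 1) ∧ znext ∈ Pset (i + 1))) :
    psi ρ₁ ρ₂ znext - psi ρ₁ ρ₂ z ≤ 0 := by
  obtain ⟨hQ0, hQset, hQbd⟩ := hQ
  simp only [gt_iff_lt, max_lt_iff] at ha hd
  obtain ⟨ha0, hba, hca⟩ := ha
  obtain ⟨hd0, hbd, hcd⟩ := hd
  have hb : b < 0 := by nlinarith
  have hc : c < 0 := by nlinarith
  have hab : (0:ℝ) < a - b := by linarith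
  have hac : (0:ℝ) < a - c := by linarith
  have hr1 : 0 < ρ₁ := by rw [hρ₁]; exact div_pos (by linarith) hab
  have hr2 : 0 < ρ₂ := by rw [hρ₂]; exact div_pos (by linarith) hac
  have h1 : a * ρ₁ = -c := by
    rw [hρ₁]
    field_simp
    linear_combination hdet
  have h2 : a * ρ₂ = -b := by
    rw [hρ₂]
    field_simp
    linear_combination hdet
  have kd1 : -ρ₁ * b + ρ₂ * c = 0 := by
    have h : a * (-ρ₁ * b + ρ₂ * c) = 0 := by linear_combination (-b) * h1 + c * h2
    rcases mul_eq_zero.mp h with h' | h'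
    · exact absurd h' (ne_of_gt ha0)
    · exact h'
  have ko1 : -ρ₁ * a + ρ₂ * c ≤ 0 := by nlinarith [mul_pos hr2 (neg_pos.2 hc)]
  have ko2 : -ρ₁ * a - a ≤ 0 := by nlinarith
  have ko3 : b - a ≤ 0 := by linarith
  have ko4 : b + ρ₂ * c ≤ 0 := by nlinarith [mul_pos hr2 (neg_pos.2 hc)]
  obtain ⟨x, y⟩ := z
  fin_cases i
  · -- i = 0, P̂₁
    obtain ⟨hx, hy⟩ : x < 0 ∧ y ≤ 0 := by
      simp only [Phat, Pset, Pbd, Matrix.cons_val_zero, Set.mem_union, Set.mem_setOf_eq] at hz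
      rcases hz with ⟨h1', h2'⟩ | ⟨h1', h2'⟩ <;> exact ⟨h1', h2'.le⟩
    rcases hcases with ⟨hztm, hnm⟩ | ⟨hztm, hnm⟩
    · have hQzt : Q zt = 0 ∨ Q zt = 1 := by
        rcases hztm with h | h
        · exact Or.inl (hQset _ zt h)
        · simpa using hQbd _ zt h
      rcases hQzt with hq | hq
      · rw [hq, show Scol a b c 0 = (b, -c) from rfl, Prod.mk_add_mk] at hznext
        subst hznext
        obtain ⟨hnx, hny⟩ : x + b < 0 ∧ y + -c ≤ 0 := by
          simp only [Phat, Pset, Pbd, Matrix.cons_val_zero, Set.mem_union,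
            Set.mem_setOf_eq] at hnm
          rcases hnm with ⟨h1', h2'⟩ | ⟨h1', h2'⟩ <;> exact ⟨h1', h2'.le⟩
        rw [psi_1 ρ₁ ρ₂ _ _ hnx hny, psi_1 ρ₁ ρ₂ x y hx hy]
        nlinarith [kd1]
      · rw [hq, show Scol a b c 1 = (a, -c) from rfl, Prod.mk_add_mk] at hznext
        subst hznext
        obtain ⟨hnx, hny⟩ : x + a < 0 ∧ y + -c ≤ 0 := by
          simp only [Phat, Pset, Pbd, Matrix.cons_val_zero, Set.mem_union,
            Set.mem_setOf_eq] at hnm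
          rcases hnm with ⟨h1', h2'⟩ | ⟨h1', h2'⟩ <;> exact ⟨h1', h2'.le⟩
        rw [psi_1 ρ₁ ρ₂ _ _ hnx hny, psi_1 ρ₁ ρ₂ x y hx hy]
        nlinarith [ko1]
    · have hq : Q zt = 1 := by simpa using hQset _ zt hztm
      rw [hq, show Scol a b c 1 = (a, -c) from rfl, Prod.mk_add_mk] at hznext
      subst hznext
      obtain ⟨hnx, hny⟩ : x + a < 0 ∧ 0 < y + -c := by
        simpa [Pset] using hnm
      rw [psi_2 ρ₁ ρ₂ _ _ hnx.le hny, psi_1 ρ₁ ρ₂ x y hx hy]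
      nlinarith [h1, mul_nonneg hr2.le (neg_nonneg.2 hy)]
  · -- i = 1, P̂₂
    obtain ⟨hx, hy⟩ : x ≤ 0 ∧ 0 < y := by
      simp only [Phat, Pset, Pbd, Matrix.cons_val_one, Matrix.head_cons, Set.mem_union,
        Set.mem_setOf_eq] at hz
      rcases hz with ⟨h1', h2'⟩ | ⟨h1', h2'⟩ <;> exact ⟨h1'.le, h2'⟩
    rcases hcases with ⟨hztm, hnm⟩ | ⟨hztm, hnm⟩
    · have hQzt : Q zt = 1 ∨ Q zt = 2 := by
        rcases hztm with h | h
        · exact Or.inl (hQset _ zt h)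
        · simpa using hQbd _ zt h
      rcases hQzt with hq | hq
      · rw [hq, show Scol a b c 1 = (a, -c) from rfl, Prod.mk_add_mk] at hznext
        subst hznext
        obtain ⟨hnx, hny⟩ : x + a ≤ 0 ∧ 0 < y + -c := by
          simp only [Phat, Pset, Pbd, Matrix.cons_val_one, Matrix.head_cons, Set.mem_union,
            Set.mem_setOf_eq] at hnm
          rcases hnm with ⟨h1', h2'⟩ | ⟨h1', h2'⟩ <;> exact ⟨h1'.le, h2'⟩
        rw [psi_2 ρ₁ ρ₂ _ _ hnx hny, psi_2 ρ₁ ρ₂ x y hx hy]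
        nlinarith [h1]
      · rw [hq, show Scol a b c 2 = (a, -a) from rfl, Prod.mk_add_mk] at hznext
        subst hznext
        obtain ⟨hnx, hny⟩ : x + a ≤ 0 ∧ 0 < y + -a := by
          simp only [Phat, Pset, Pbd, Matrix.cons_val_one, Matrix.head_cons, Set.mem_union,
            Set.mem_setOf_eq] at hnm
          rcases hnm with ⟨h1', h2'⟩ | ⟨h1', h2'⟩ <;> exact ⟨h1'.le, h2'⟩
        rw [psi_2 ρ₁ ρ₂ _ _ hnx hny, psi_2 ρ₁ ρ₂ x y hx hy]
        nlinarith [ko2]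
    · have hq : Q zt = 2 := by simpa using hQset _ zt hztm
      rw [hq, show Scol a b c 2 = (a, -a) from rfl, Prod.mk_add_mk] at hznext
      subst hznext
      obtain ⟨hnx, hny⟩ : 0 < x + a ∧ 0 < y + -a := by
        simpa [Pset] using hnm
      rw [psi_3 ρ₁ ρ₂ _ _ hnx hny.le, psi_2 ρ₁ ρ₂ x y hx hy]
      nlinarith [mul_nonneg hr1.le (neg_nonneg.2 hx)]
  · -- i = 2, P̂₃
    obtain ⟨hx, hy⟩ : 0 < x ∧ 0 ≤ y := by
      simp only [Phat, Pset, Pbd, Matrix.cons_val_two, Matrix.tail_cons, Matrix.head_cons,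
        Set.mem_union, Set.mem_setOf_eq] at hz
      rcases hz with ⟨h1', h2'⟩ | ⟨h1', h2'⟩
      · exact ⟨h1', h2'.le⟩
      · exact ⟨h1', h2'.ge⟩
    rcases hcases with ⟨hztm, hnm⟩ | ⟨hztm, hnm⟩
    · have hQzt : Q zt = 2 ∨ Q zt = 3 := by
        rcases hztm with h | h
        · exact Or.inl (hQset _ zt h)
        · simpa using hQbd _ zt h
      rcases hQzt with hq | hq
      · rw [hq, show Scol a b c 2 = (a, -a) from rfl, Prod.mk_add_mk] at hznext
        subst hznext
        obtain ⟨hnx, hny⟩ : 0 < x + a ∧ 0 ≤ y + -a := by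
          simp only [Phat, Pset, Pbd, Matrix.cons_val_two, Matrix.tail_cons, Matrix.head_cons,
            Set.mem_union, Set.mem_setOf_eq] at hnm
          rcases hnm with ⟨h1', h2'⟩ | ⟨h1', h2'⟩
          · exact ⟨h1', h2'.le⟩
          · exact ⟨h1', h2'.ge⟩
        rw [psi_3 ρ₁ ρ₂ _ _ hnx hny, psi_3 ρ₁ ρ₂ x y hx hy]
        linarith
      · rw [hq, show Scol a b c 3 = (b, -a) from rfl, Prod.mk_add_mk] at hznext
        subst hznext
        obtain ⟨hnx, hny⟩ : 0 < x + b ∧ 0 ≤ y + -a := by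
          simp only [Phat, Pset, Pbd, Matrix.cons_val_two, Matrix.tail_cons, Matrix.head_cons,
            Set.mem_union, Set.mem_setOf_eq] at hnm
          rcases hnm with ⟨h1', h2'⟩ | ⟨h1', h2'⟩
          · exact ⟨h1', h2'.le⟩
          · exact ⟨h1', h2'.ge⟩
        rw [psi_3 ρ₁ ρ₂ _ _ hnx hny, psi_3 ρ₁ ρ₂ x y hx hy]
        linarith
    · have hq : Q zt = 3 := by simpa using hQset _ zt hztm
      rw [hq, show Scol a b c 3 = (b, -a) from rfl, Prod.mk_add_mk] at hznext
      subst hznext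
      obtain ⟨hnx, hny⟩ : 0 < x + b ∧ y + -a < 0 := by
        simpa [Pset] using hnm
      rw [psi_4 ρ₁ ρ₂ _ _ hnx.le hny, psi_3 ρ₁ ρ₂ x y hx hy]
      nlinarith [h2, mul_nonneg hr2.le hy]
  · -- i = 3, P̂₄
    obtain ⟨hx, hy⟩ : 0 ≤ x ∧ y < 0 := by
      simp only [Phat, Pset, Pbd, Matrix.cons_val_three, Matrix.tail_cons, Matrix.head_cons,
        Matrix.cons_val_fin_one, Matrix.cons_val_zero, Set.mem_union, Set.mem_setOf_eq] at hz
      rcases hz with ⟨h1', h2'⟩ | ⟨h1', h2'⟩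
      · exact ⟨h1'.le, h2'⟩
      · exact ⟨h1'.ge, h2'⟩
    rcases hcases with ⟨hztm, hnm⟩ | ⟨hztm, hnm⟩
    · have hQzt : Q zt = 3 ∨ Q zt = 0 := by
        rcases hztm with h | h
        · exact Or.inl (hQset _ zt h)
        · simpa using hQbd _ zt h
      rcases hQzt with hq | hq
      · rw [hq, show Scol a b c 3 = (b, -a) from rfl, Prod.mk_add_mk] at hznext
        subst hznext
        obtain ⟨hnx, hny⟩ : 0 ≤ x + b ∧ y + -a < 0 := by
          simp only [Phat, Pset, Pbd, Matrix.cons_val_three, Matrix.tail_cons, Matrix.head_cons,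
            Matrix.cons_val_fin_one, Matrix.cons_val_zero, Set.mem_union,
            Set.mem_setOf_eq] at hnm
          rcases hnm with ⟨h1', h2'⟩ | ⟨h1', h2'⟩
          · exact ⟨h1'.le, h2'⟩
          · exact ⟨h1'.ge, h2'⟩
        rw [psi_4 ρ₁ ρ₂ _ _ hnx hny, psi_4 ρ₁ ρ₂ x y hx hy]
        nlinarith [h2]
      · rw [hq, show Scol a b c 0 = (b, -c) from rfl, Prod.mk_add_mk] at hznext
        subst hznext
        obtain ⟨hnx, hny⟩ : 0 ≤ x + b ∧ y + -c < 0 := by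
          simp only [Phat, Pset, Pbd, Matrix.cons_val_three, Matrix.tail_cons, Matrix.head_cons,
            Matrix.cons_val_fin_one, Matrix.cons_val_zero, Set.mem_union,
            Set.mem_setOf_eq] at hnm
          rcases hnm with ⟨h1', h2'⟩ | ⟨h1', h2'⟩
          · exact ⟨h1'.le, h2'⟩
          · exact ⟨h1'.ge, h2'⟩
        rw [psi_4 ρ₁ ρ₂ _ _ hnx hny, psi_4 ρ₁ ρ₂ x y hx hy]
        nlinarith [ko4]
    · have hq : Q zt = 0 := by simpa using hQset _ zt hztm
      rw [hq, show Scol a b c 0 = (b, -c) from rfl, Prod.mk_add_mk] at hznext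
      subst hznext
      obtain ⟨hnx, hny⟩ : x + b < 0 ∧ y + -c < 0 := by
        simpa [Pset] using hnm
      rw [psi_1 ρ₁ ρ₂ _ _ hnx hny.le, psi_4 ρ₁ ρ₂ x y hx hy]
      nlinarith [kd1, mul_nonneg hr1.le hx]
end

section
/- Let A = [[a,b],[c,d]] ∈ ℝ^{2×2} satisfy det A = ad − bc = 0 and a, d > max{0, b, c}, with ρ₁, ρ₂, a_max, the regions, ψ, S, Q, and B as defined. Let {zᵗ} follow the OFP dual dynamics (z̃ᵗ⁺¹ = 2zᵗ − zᵗ⁻¹, zᵗ⁺¹ = zᵗ + S·Q(z̃ᵗ⁺¹), with each increment zᵗ − zᵗ⁻¹ a column of S). Suppose ψ(zᵗ) > B and zᵗ ∈ P̂ᵢ for some i ∈ {1,2,3,4}. Then z̃ᵗ⁺¹ ∈ Pᵢ₊₁ implies zᵗ⁺¹ ∈ Pᵢ₊₁ (indices mod 4). -/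
/-- for OFP dual iterates with `ψ(zᵗ) > B` and `zᵗ ∈ P̂ᵢ`,
if the predicted vector `z̃ᵗ⁺¹ = 2zᵗ − zᵗ⁻¹` lies in `Pᵢ₊₁`, then the next iterate
`zᵗ⁺¹ = zᵗ + S·Q(z̃ᵗ⁺¹)` also lies in `Pᵢ₊₁` (indices mod 4). -/
theorem ofp_invariant_next_region
    (a b c d : ℝ)
    (hdet : a * d - b * c = 0)
    (ha : a > max 0 (max b c)) (hd : d > max 0 (max b c))
    (ρ₁ ρ₂ amax : ℝ)
    (hρ₁ : ρ₁ = (d - c) / (a - b)) (hρ₂ : ρ₂ = (d - b) / (a - c))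
    (hamax : amax = max (max |a| |b|) (max |c| |d|))
    (Q : ℝ × ℝ → Fin 4) (hQ : IsChoiceMap Q)
    (zprev z zt znext : ℝ × ℝ)
    (hstep : ∃ j : Fin 4, z = zprev + Scol a b c j)
    (hzt : zt = (2 : ℝ) • z - zprev)
    (hznext : znext = z + Scol a b c (Q zt))
    (i : Fin 4)
    (hψ : Bconst ρ₁ ρ₂ amax < psi ρ₁ ρ₂ z)
    (hz : z ∈ Phat i) :
    zt ∈ Pset (i + 1) → znext ∈ Pset (i + 1) := by
  intro hmem
  -- basic sign facts
  have h0a : 0 < a := lt_of_le_of_lt (le_max_left 0 _) ha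
  have hba : b < a := lt_of_le_of_lt ((le_max_left b c).trans (le_max_right 0 _)) ha
  have hca : c < a := lt_of_le_of_lt ((le_max_right b c).trans (le_max_right 0 _)) ha
  have haM : |a| ≤ amax := hamax ▸ le_trans (le_max_left _ _) (le_max_left _ _)
  have hbM : |b| ≤ amax := hamax ▸ le_trans (le_max_right _ _) (le_max_left _ _)
  have hcM : |c| ≤ amax := hamax ▸ le_trans (le_max_left _ _) (le_max_right _ _)
  have haM' : a ≤ amax := (le_abs_self a).trans haM
  have hbM' : b ≤ amax := (le_abs_self b).trans hbM
  have hcM' : c ≤ amax := (le_abs_self c).trans hcM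
  have hbM'' : -b ≤ amax := (neg_le_abs b).trans hbM
  have hcM'' : -c ≤ amax := (neg_le_abs c).trans hcM
  have hM0 : 0 ≤ amax := (abs_nonneg a).trans haM
  -- ψ is bounded on ℓ¹ balls
  have hbound : ∀ w : ℝ × ℝ, psi ρ₁ ρ₂ w ≤ (1 + |ρ₁| + |ρ₂|) * (|w.1| + |w.2|) := by
    intro w
    have a1 : -(ρ₁ * w.1) ≤ |ρ₁| * |w.1| := (neg_le_abs _).trans (abs_mul _ _).le
    have a2 : ρ₁ * w.1 ≤ |ρ₁| * |w.1| := (le_abs_self _).trans (abs_mul _ _).le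
    have a3 : -(ρ₂ * w.2) ≤ |ρ₂| * |w.2| := (neg_le_abs _).trans (abs_mul _ _).le
    have a4 : ρ₂ * w.2 ≤ |ρ₂| * |w.2| := (le_abs_self _).trans (abs_mul _ _).le
    have b1 : w.1 ≤ |w.1| := le_abs_self _
    have b2 : w.2 ≤ |w.2| := le_abs_self _
    have n1 : (0:ℝ) ≤ |ρ₁| * |w.1| := mul_nonneg (abs_nonneg _) (abs_nonneg _)
    have n2 : (0:ℝ) ≤ |ρ₁| * |w.2| := mul_nonneg (abs_nonneg _) (abs_nonneg _)
    have n3 : (0:ℝ) ≤ |ρ₂| * |w.1| := mul_nonneg (abs_nonneg _) (abs_nonneg _)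
    have n4 : (0:ℝ) ≤ |ρ₂| * |w.2| := mul_nonneg (abs_nonneg _) (abs_nonneg _)
    have n5 : (0:ℝ) ≤ |w.1| := abs_nonneg _
    have n6 : (0:ℝ) ≤ |w.2| := abs_nonneg _
    unfold psi
    split_ifs <;> linarith
  have hBset : ∀ w : ℝ × ℝ, |w.1| + |w.2| ≤ 6 * amax → psi ρ₁ ρ₂ w ≤ Bconst ρ₁ ρ₂ amax := by
    intro w hw
    apply le_csInf
    · refine ⟨(1 + |ρ₁| + |ρ₂|) * (6 * amax), ?_, ?_⟩
      · positivity
      · intro v hv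
        refine (hbound v).trans ?_
        have h1 : (0:ℝ) < 1 + |ρ₁| + |ρ₂| := by positivity
        nlinarith
    · intro β hβ
      exact hβ.2 w hw
  have hfar : 6 * amax < |z.1| + |z.2| := by
    by_contra h
    push_neg at h
    exact absurd hψ (not_lt.mpr (hBset z h))
  -- step structure
  obtain ⟨j, hj⟩ := hstep
  have hzt' : zt = z + Scol a b c j := by
    rw [hzt, hj, two_smul]; abel
  have hS1 : (Scol a b c j).1 = a ∨ (Scol a b c j).1 = b := by
    fin_cases j <;> simp [Scol]
  have hS2 : (Scol a b c j).2 = -c ∨ (Scol a b c j).2 = -a := by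
    fin_cases j <;> simp [Scol]
  have hzt1 : zt.1 = z.1 + (Scol a b c j).1 := by rw [hzt']; rfl
  have hzt2 : zt.2 = z.2 + (Scol a b c j).2 := by rw [hzt']; rfl
  have hQzt : Q zt = i + 1 := hQ.2.1 (i + 1) zt hmem
  rw [hQzt] at hznext
  fin_cases i
  all_goals (
    simp only [Phat, Pset, Pbd, Set.mem_union, Set.mem_setOf_eq,
      Matrix.cons_val_zero, Matrix.cons_val_one, Matrix.head_cons,
      Matrix.cons_val_two, Matrix.tail_cons, Matrix.cons_val_three,
      Fin.isValue] at hz hmem ⊢)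
  -- case i = 0 : z ∈ P̂₁, zt ∈ P₂, znext = z + (a, -c)
  · have hz1 : z.1 < 0 := by rcases hz with ⟨h1, _⟩ | ⟨h1, _⟩ <;> exact h1
    have hz2 : z.2 ≤ 0 := by rcases hz with ⟨_, h2⟩ | ⟨_, h2⟩ <;> [exact h2.le; exact h2.le]
    have habs1 : |z.1| = -z.1 := abs_of_neg hz1
    have habs2 : |z.2| = -z.2 := abs_of_nonpos hz2
    rw [habs1, habs2] at hfar
    have hs2 : (Scol a b c j).2 = -c := by
      rcases hS2 with h | h
      · exact h
      · exfalso; rw [h] at hzt2; have := hmem.2; rw [hzt2] at this; linarith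
    rw [hs2] at hzt2
    have hc0 : 0 < z.2 - c := by have := hmem.2; rw [hzt2] at this; linarith
    have hzn : znext = (z.1 + a, z.2 + -c) := by rw [hznext]; rfl
    rw [hzn]
    constructor
    · show z.1 + a < 0
      linarith
    · show 0 < z.2 + -c
      linarith
  -- case i = 1 : z ∈ P̂₂, zt ∈ P₃, znext = z + (a, -a)
  · have hz1 : z.1 ≤ 0 := by rcases hz with ⟨h1, _⟩ | ⟨h1, _⟩ <;> [exact h1.le; exact h1.le]
    have hz2 : 0 < z.2 := by rcases hz with ⟨_, h2⟩ | ⟨_, h2⟩ <;> exact h2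
    have habs1 : |z.1| = -z.1 := abs_of_nonpos hz1
    have habs2 : |z.2| = z.2 := abs_of_pos hz2
    rw [habs1, habs2] at hfar
    have hzsmall : -z.1 ≤ amax ∧ 0 < z.1 + a := by
      have h1 := hmem.1
      rcases hS1 with h | h <;> rw [h] at hzt1 <;> rw [hzt1] at h1
      · constructor <;> linarith
      · constructor <;> linarith
    have hzn : znext = (z.1 + a, z.2 + -a) := by rw [hznext]; rfl
    rw [hzn]
    exact ⟨hzsmall.2, by show (0:ℝ) < z.2 + -a; linarith [hzsmall.1]⟩
  -- case i = 2 : z ∈ P̂₃, zt ∈ P₄, znext = z + (b, -a)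
  · have hz1 : 0 < z.1 := by rcases hz with ⟨h1, _⟩ | ⟨h1, _⟩ <;> exact h1
    have hz2 : 0 ≤ z.2 := by rcases hz with ⟨_, h2⟩ | ⟨_, h2⟩ <;> [exact h2.le; exact h2.ge]
    have habs1 : |z.1| = z.1 := abs_of_pos hz1
    have habs2 : |z.2| = z.2 := abs_of_nonneg hz2
    rw [habs1, habs2] at hfar
    have hzsmall : z.2 ≤ amax ∧ z.2 - a < 0 := by
      have h2 := hmem.2
      rcases hS2 with h | h <;> rw [h] at hzt2 <;> rw [hzt2] at h2
      · constructor <;> linarith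
      · constructor <;> linarith
    have hzn : znext = (z.1 + b, z.2 + -a) := by rw [hznext]; rfl
    rw [hzn]
    refine ⟨by show (0:ℝ) < z.1 + b; linarith [hzsmall.1],
      by show z.2 + -a < 0; linarith [hzsmall.2]⟩
  -- case i = 3 : z ∈ P̂₄, zt ∈ P₁, znext = z + (b, -c)
  · have hz1 : 0 ≤ z.1 := by rcases hz with ⟨h1, _⟩ | ⟨h1, _⟩ <;> [exact h1.le; exact h1.ge]
    have hz2 : z.2 < 0 := by rcases hz with ⟨_, h2⟩ | ⟨_, h2⟩ <;> exact h2
    have habs1 : |z.1| = z.1 := abs_of_nonneg hz1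
    have habs2 : |z.2| = -z.2 := abs_of_neg hz2
    rw [habs1, habs2] at hfar
    have hs1 : (Scol a b c j).1 = b := by
      rcases hS1 with h | h
      · exfalso; rw [h] at hzt1; have := hmem.1; rw [hzt1] at this; linarith
      · exact h
    rw [hs1] at hzt1
    have hb0 : z.1 + b < 0 := by have := hmem.1; rw [hzt1] at this; linarith
    have hzn : znext = (z.1 + b, z.2 + -c) := by rw [hznext]; rfl
    rw [hzn]
    exact ⟨hb0, by show z.2 + -c < 0; linarith⟩
end
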